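/- arXiv:2001.00875 — 4 statements merged into one kernel-verified Lean document; each statement's English description precedes it below -/
import Mathlib

section
/- Let V : [0,∞) → ℝ be measurable with sup_{x≥0} ∫_x^{x+1} |V(t)| dt < ∞. Then for each z ∈ ℂ with Im z > 0, one has u(x,z) ≠ 0 for all x > 0 and sup_{x ≥ 1} | (∂_x u)(x,z) / u(x,z) | < ∞. -/
/-!
Pairing `-u'' + V u = z u` with `conj u` and integrating by parts over `[0, x]` gives
`Im (conj (u x) * u' x) = -Im z * ∫₀ˣ |u|²`. Since `u'(0) = 1`, the right-hand side is nonzero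
for `x > 0`, so `u` has no zeros there, and `Im z * ∫₀ˣ |u|² ≤ |u x| |u' x|`.

On `J = [x - 1/2, x]` the uniform bound on `∫ |V|` controls the oscillation of `u'` by
`(C + |z|) max_J |u|`, hence `|u'| ≤ K max_J |u|` on `J` with `K = 4 + C + |z|`. Then `|u|` stays
above half its maximum on a subinterval of length `1/(2K)`, which gives
`|u' x|² ≤ 8 K³ ∫_J |u|²`. Combined with the first inequality, `|u' x| ≤ 8 K³ / Im z * |u x|`.
-/

open MeasureTheory Set Topology ComplexConjugate

/-- `u` is the Dirichlet solution for potential `V` at energy `z`: `u ∈ W^{2,1}_loc([0,∞))`,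
`-u'' + V u = z u` a.e. (encoded in integrated form), `u(0) = 0`, `u'(0) = 1`. -/
def IsDirichlet (V : ℝ → ℝ) (z : ℂ) (u u' : ℝ → ℂ) : Prop :=
  u 0 = 0 ∧ u' 0 = 1 ∧
  (∀ x, 0 ≤ x → HasDerivWithinAt u (u' x) (Set.Ici 0) x) ∧
  (∀ x, 0 ≤ x → u' x = 1 + ∫ t in (0:ℝ)..x, ((V t : ℂ) - z) * u t)

theorem integral_primitive_mul {𝕜 : Type*} [RCLike 𝕜] {f g : ℝ → 𝕜} {a b : ℝ} (hab : a ≤ b)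
    (hf : IntegrableOn f (Ioc a b)) (hg : IntegrableOn g (Ioc a b)) :
    ∫ t in a..b, (∫ s in a..t, f s) * g t = ∫ s in a..b, f s * ∫ t in s..b, g t := by
  set μ := volume.restrict (Ioc a b)
  -- both sides are the integral of `f s * g t` over the triangle `a < s ≤ t ≤ b`
  let F : ℝ → ℝ → 𝕜 := fun t s => if s ≤ t then f s * g t else 0
  have hF : Integrable (Function.uncurry F) (μ.prod μ) := by
    have hprod : Integrable (fun p : ℝ × ℝ => f p.2 * g p.1) (μ.prod μ) :=
      (hg.mul_prod hf).congr (.of_forall fun p => mul_comm _ _)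
    refine (hprod.indicator (measurableSet_le measurable_snd measurable_fst)).congr
      (.of_forall fun p => ?_)
    simp [F, indicator_apply, Function.uncurry]
  have hleft : ∀ t ∈ Ioc a b, ∫ s, F t s ∂μ = (∫ s in a..t, f s) * g t := by
    intro t ht
    have hF_t : (F t) = (Iic t).indicator (fun s => f s * g t) := by
      ext s; simp [F, indicator_apply]
    rw [hF_t, integral_indicator measurableSet_Iic, Measure.restrict_restrict measurableSet_Iic,
      Iic_inter_Ioc_of_le ht.2, integral_mul_const, intervalIntegral.integral_of_le ht.1.le]
  have hright : ∀ s ∈ Ioc a b, ∫ t, F t s ∂μ = f s * ∫ t in s..b, g t := by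
    intro s hs
    have hF_s : (fun t => F t s) = (Ici s).indicator (fun t => f s * g t) := by
      ext t; simp [F, indicator_apply]
    have hIcc : Ici s ∩ Ioc a b = Icc s b := by
      ext t; simp only [mem_inter_iff, mem_Ici, mem_Ioc, mem_Icc]; grind
    rw [hF_s, integral_indicator measurableSet_Ici, Measure.restrict_restrict measurableSet_Ici,
      hIcc, integral_Icc_eq_integral_Ioc, integral_const_mul,
      intervalIntegral.integral_of_le hs.2]
  calc ∫ t in a..b, (∫ s in a..t, f s) * g t
      = ∫ t, ∫ s, F t s ∂μ ∂μ := by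
        rw [intervalIntegral.integral_of_le hab]
        exact setIntegral_congr_fun measurableSet_Ioc fun t ht => (hleft t ht).symm
    _ = ∫ s, ∫ t, F t s ∂μ ∂μ := integral_integral_swap hF
    _ = ∫ s in a..b, f s * ∫ t in s..b, g t := by
        rw [intervalIntegral.integral_of_le hab]
        exact setIntegral_congr_fun measurableSet_Ioc hright

section
variable {E : Type*} [NormedAddCommGroup E] [NormedSpace ℝ E]

theorem norm_integral_le_integral_norm_of_mem_Icc {g : ℝ → E} {a b s t : ℝ}
    (hg : IntegrableOn g (Ioc a b)) (hab : a ≤ b) (hs : s ∈ Icc a b) (ht : t ∈ Icc a b) :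
    ‖∫ x in s..t, g x‖ ≤ ∫ x in a..b, ‖g x‖ := by
  rw [intervalIntegral.integral_of_le hab]
  refine (intervalIntegral.norm_integral_le_integral_norm_uIoc).trans
    (setIntegral_mono_set hg.norm (.of_forall fun _ => norm_nonneg _) (.of_forall ?_))
  exact fun x hx => ⟨lt_of_le_of_lt (le_min hs.1 ht.1) hx.1, hx.2.trans (max_le hs.2 ht.2)⟩

theorem sub_mul_norm_le_of_integral_eq_sub [CompleteSpace E] {u u' : ℝ → E} {a b S G t : ℝ}
    (hab : a ≤ b) (hu' : IntervalIntegrable u' volume a b) (hFTC : ∫ s in a..b, u' s = u b - u a)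
    (hua : ‖u a‖ ≤ S) (hub : ‖u b‖ ≤ S) (hosc : ∀ s ∈ Icc a b, ‖u' s - u' t‖ ≤ G) :
    (b - a) * ‖u' t‖ ≤ 2 * S + (b - a) * G := by
  have hsplit : (b - a) • u' t = (u b - u a) - ∫ s in a..b, (u' s - u' t) := by
    rw [intervalIntegral.integral_sub hu' intervalIntegrable_const, hFTC,
      intervalIntegral.integral_const]
    abel
  have hosc_int : ‖∫ s in a..b, (u' s - u' t)‖ ≤ G * (b - a) := by
    rw [← abs_of_nonneg (sub_nonneg.2 hab)]
    exact intervalIntegral.norm_integral_le_of_norm_le_const fun s hs =>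
      hosc s (Ioc_subset_Icc_self (by rwa [uIoc_of_le hab] at hs))
  calc (b - a) * ‖u' t‖ = ‖(b - a) • u' t‖ := by
        rw [norm_smul, Real.norm_of_nonneg (sub_nonneg.2 hab)]
    _ ≤ ‖u b‖ + ‖u a‖ + G * (b - a) := by
        rw [hsplit]
        exact (norm_sub_le _ _).trans (add_le_add (norm_sub_le _ _) hosc_int)
    _ ≤ 2 * S + (b - a) * G := by linarith

theorem mul_sq_le_integral_sq_norm [CompleteSpace E] {u u' : ℝ → E} {a b t δ M : ℝ}
    (ht : t ∈ Icc a b) (hδ : 0 ≤ δ) (hδab : δ ≤ b - a) (hu : ContinuousOn u (Icc a b))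
    (hFTC : ∀ x ∈ Icc a b, ∀ y ∈ Icc a b, ∫ s in x..y, u' s = u y - u x)
    (hu' : ∀ s ∈ Icc a b, ‖u' s‖ ≤ M) (hMδ : M * δ ≤ ‖u t‖ / 2) :
    δ * (‖u t‖ / 2) ^ 2 ≤ ∫ s in a..b, ‖u s‖ ^ 2 := by
  set p := min t (b - δ)
  have hap : a ≤ p := le_min ht.1 (by linarith)
  have hpt : p ≤ t := min_le_left _ _
  have htp : t - δ ≤ p := le_min (by linarith) (by linarith [ht.2])
  have hpb : p + δ ≤ b := by linarith [min_le_right t (b - δ)]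
  have hsub : Icc p (p + δ) ⊆ Icc a b := Icc_subset_Icc hap hpb
  have hM : 0 ≤ M := (norm_nonneg _).trans (hu' t ht)
  have hlow : ∀ s ∈ Icc p (p + δ), ‖u t‖ / 2 ≤ ‖u s‖ := by
    intro s hs
    have hdist : ‖u t - u s‖ ≤ M * δ := by
      rw [← hFTC s (hsub hs) t ht]
      calc _ ≤ M * |t - s| := intervalIntegral.norm_integral_le_of_norm_le_const fun r hr =>
            hu' r (uIcc_subset_Icc (hsub hs) ht (uIoc_subset_uIcc hr))
        _ ≤ M * δ := mul_le_mul_of_nonneg_left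
            (abs_sub_le_iff.2 ⟨by linarith [hs.1], by linarith [hs.2]⟩) hM
    linarith [norm_sub_norm_le (u t) (u s)]
  have hint : ∀ {c d}, Icc c d ⊆ Icc a b → c ≤ d →
      IntervalIntegrable (fun s => ‖u s‖ ^ 2) volume c d := fun hcd hle =>
    ((hu.mono hcd).norm.pow 2).intervalIntegrable_of_Icc hle
  calc δ * (‖u t‖ / 2) ^ 2 = ∫ _ in p..p + δ, (‖u t‖ / 2) ^ 2 := by simp
    _ ≤ ∫ s in p..p + δ, ‖u s‖ ^ 2 :=
        intervalIntegral.integral_mono_on (by linarith) intervalIntegrable_const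
          (hint hsub (by linarith)) fun s hs => pow_le_pow_left₀ (by positivity) (hlow s hs) 2
    _ ≤ ∫ s in a..b, ‖u s‖ ^ 2 :=
        intervalIntegral.integral_mono_interval hap (by linarith) hpb
          (.of_forall fun _ => by positivity) (hint subset_rfl (by linarith))

end

theorem continuousOn_Ici_of_forall_Icc {β : Type*} [TopologicalSpace β] {f : ℝ → β} {a : ℝ}
    (hf : ∀ b, ContinuousOn f (Icc a b)) : ContinuousOn f (Ici a) := fun x hx =>
  (continuousWithinAt_inter (Iic_mem_nhds (lt_add_one x))).1 (hf (x + 1) x ⟨hx, by linarith⟩)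

theorem Complex.im_conj_mul_sub_mul_self (w : ℂ) (v : ℝ) (z : ℂ) :
    (conj w * ((v - z) * w)).im = -(z.im * ‖w‖ ^ 2) := by
  rw [mul_left_comm, Complex.conj_mul']
  simp [Complex.mul_im, ← Complex.ofReal_pow]

theorem nonneg_of_forall_integral_abs_le {V : ℝ → ℝ} {C : ℝ}
    (hC : ∀ a, 0 ≤ a → ∫ t in a..a + 1, |V t| ≤ C) : 0 ≤ C :=
  (intervalIntegral.integral_nonneg (by norm_num) fun t _ => abs_nonneg (V t)).trans (hC 0 le_rfl)

namespace IsDirichlet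

variable {V : ℝ → ℝ} {z : ℂ} {u u' : ℝ → ℂ}

theorem continuousOn (hu : IsDirichlet V z u u') : ContinuousOn u (Ici 0) :=
  fun x hx => (hu.2.2.1 x hx).continuousWithinAt

theorem eventually_ne_zero (hu : IsDirichlet V z u u') : ∀ᶠ t in 𝓝[>] 0, u t ≠ 0 := by
  have h := (hu.2.2.1 0 le_rfl).eventually_ne (c := 0) (by rw [hu.2.1]; exact one_ne_zero)
  rwa [Ici_sdiff_left] at h

theorem intervalIntegrable_sq_norm (hu : IsDirichlet V z u u') {a b : ℝ} (ha : 0 ≤ a)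
    (hb : 0 ≤ b) : IntervalIntegrable (fun t => ‖u t‖ ^ 2) volume a b :=
  ((hu.continuousOn.mono fun _ ht => le_trans (le_min ha hb) ht.1).norm.pow 2).intervalIntegrable

theorem integral_sq_norm_pos (hu : IsDirichlet V z u u') {x : ℝ} (hx : 0 < x) :
    0 < ∫ t in 0..x, ‖u t‖ ^ 2 := by
  obtain ⟨ε, hε, hne⟩ := mem_nhdsGT_iff_exists_Ioo_subset.1 hu.eventually_ne_zero
  have hb : 0 < min x ε := lt_min hx hε
  have hpos : ∀ t ∈ Ioo 0 (min x ε), 0 < ‖u t‖ ^ 2 := fun t ht =>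
    pow_pos (norm_pos_iff.2 (hne ⟨ht.1, ht.2.trans_le (min_le_right _ _)⟩)) 2
  calc 0 < ∫ t in 0..min x ε, ‖u t‖ ^ 2 :=
        intervalIntegral.intervalIntegral_pos_of_pos_on
          (hu.intervalIntegrable_sq_norm le_rfl hb.le) hpos hb
    _ ≤ ∫ t in 0..x, ‖u t‖ ^ 2 :=
        intervalIntegral.integral_mono_interval le_rfl hb.le (min_le_left _ _)
          (.of_forall fun _ => by positivity) (hu.intervalIntegrable_sq_norm le_rfl hx.le)

variable (hu : IsDirichlet V z u u') (hV : ∀ x, IntegrableOn V (Icc 0 x))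
include hu hV

theorem integrableOn_mul (b : ℝ) :
    IntegrableOn (fun t => ((V t : ℂ) - z) * u t) (Icc 0 b) := by
  have hVz : IntegrableOn (fun t => (V t : ℂ) - z) (Icc 0 b) :=
    (hV b).ofReal.sub (integrableOn_const measure_Icc_lt_top.ne)
  exact hVz.mul_continuousOn (hu.continuousOn.mono fun _ ht => ht.1) isCompact_Icc

theorem intervalIntegrable_mul {a b : ℝ} (ha : 0 ≤ a) (hb : 0 ≤ b) :
    IntervalIntegrable (fun t => ((V t : ℂ) - z) * u t) volume a b :=
  ((hu.integrableOn_mul hV (max a b)).mono_set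
    (uIcc_subset_Icc ⟨ha, le_max_left a b⟩ ⟨hb, le_max_right a b⟩)).intervalIntegrable

theorem deriv_sub_deriv_eq_integral {a b : ℝ} (ha : 0 ≤ a) (hb : 0 ≤ b) :
    u' b - u' a = ∫ t in a..b, ((V t : ℂ) - z) * u t := by
  rw [hu.2.2.2 a ha, hu.2.2.2 b hb, add_sub_add_left_eq_sub,
    intervalIntegral.integral_interval_sub_left (hu.intervalIntegrable_mul hV le_rfl hb)
      (hu.intervalIntegrable_mul hV le_rfl ha)]

theorem continuousOn_deriv : ContinuousOn u' (Ici 0) := by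
  refine continuousOn_Ici_of_forall_Icc fun b => ?_
  rcases lt_or_ge b 0 with hb | hb
  · simp [Icc_eq_empty_of_lt hb]
  rw [← uIcc_of_le hb]
  refine (continuousOn_const.add (intervalIntegral.continuousOn_primitive_interval ?_)).congr
    fun x hx => hu.2.2.2 x (uIcc_of_le hb ▸ hx).1
  exact uIcc_of_le hb ▸ hu.integrableOn_mul hV b

theorem intervalIntegrable_deriv {a b : ℝ} (ha : 0 ≤ a) (hb : 0 ≤ b) :
    IntervalIntegrable u' volume a b :=
  ((hu.continuousOn_deriv hV).mono fun _ hx => le_trans (le_min ha hb) hx.1).intervalIntegrable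

theorem integral_deriv_eq_sub {a b : ℝ} (ha : 0 ≤ a) (hb : 0 ≤ b) :
    ∫ t in a..b, u' t = u b - u a := by
  have hsub : uIcc a b ⊆ Ici 0 := fun x hx => le_trans (le_min ha hb) hx.1
  refine intervalIntegral.integral_eq_sub_of_hasDeriv_right (hu.continuousOn.mono hsub)
    (fun x hx => (hu.2.2.1 x (hsub (Ioo_subset_Icc_self hx))).mono fun y hy => ?_)
    (hu.intervalIntegrable_deriv hV ha hb)
  exact mem_Ici.2 ((hsub (Ioo_subset_Icc_self hx)).trans (le_of_lt hy))

theorem conj_mul_deriv {x : ℝ} (hx : 0 ≤ x) :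
    conj (u x) * u' x =
      (∫ t in 0..x, conj (u t) * (((V t : ℂ) - z) * u t)) + ∫ t in 0..x, conj (u' t) * u' t := by
  have hu'c : ContinuousOn u' (uIcc 0 x) :=
    (hu.continuousOn_deriv hV).mono fun t ht => (uIcc_of_le hx ▸ ht).1
  have hconj : ContinuousOn (fun t => conj (u' t)) (uIcc 0 x) :=
    Complex.continuous_conj.comp_continuousOn hu'c
  have hprimitive : ∀ t ∈ uIcc 0 x, ∫ s in 0..t, conj (u' s) = conj (u t) := fun t ht => by
    rw [intervalIntegral.intervalIntegral_conj,
      hu.integral_deriv_eq_sub hV le_rfl (uIcc_of_le hx ▸ ht).1, hu.1, sub_zero]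
  have hfubini := integral_primitive_mul hx
    ((hconj.integrableOn_compact isCompact_uIcc).mono_set (uIcc_of_le hx ▸ Ioc_subset_Icc_self))
    ((hu.integrableOn_mul hV x).mono_set Ioc_subset_Icc_self)
  rw [← sub_eq_iff_eq_add]
  calc conj (u x) * u' x - ∫ t in 0..x, conj (u' t) * u' t
      = ∫ s in 0..x, conj (u' s) * (u' x - u' s) := by
        have h₁ : IntervalIntegrable (fun s => conj (u' s) * u' x) volume 0 x :=
          (hconj.mul continuousOn_const).intervalIntegrable
        have h₂ : IntervalIntegrable (fun s => conj (u' s) * u' s) volume 0 x :=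
          (hconj.mul hu'c).intervalIntegrable
        simp_rw [mul_sub]
        rw [intervalIntegral.integral_sub h₁ h₂, intervalIntegral.integral_mul_const,
          hprimitive x right_mem_uIcc]
    _ = ∫ s in 0..x, conj (u' s) * ∫ t in s..x, ((V t : ℂ) - z) * u t :=
        intervalIntegral.integral_congr fun s hs => by
          rw [hu.deriv_sub_deriv_eq_integral hV (uIcc_of_le hx ▸ hs).1 hx]
    _ = ∫ t in 0..x, (∫ s in 0..t, conj (u' s)) * (((V t : ℂ) - z) * u t) := hfubini.symm
    _ = ∫ t in 0..x, conj (u t) * (((V t : ℂ) - z) * u t) :=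
        intervalIntegral.integral_congr fun t ht => by rw [hprimitive t ht]

theorem im_conj_mul_deriv {x : ℝ} (hx : 0 ≤ x) :
    (conj (u x) * u' x).im = -(z.im * ∫ t in 0..x, ‖u t‖ ^ 2) := by
  have hIcc : Icc 0 x ⊆ Ici 0 := fun t ht => ht.1
  have h₁ : IntervalIntegrable (fun t => conj (u t) * (((V t : ℂ) - z) * u t)) volume 0 x :=
    (intervalIntegrable_iff_integrableOn_Icc_of_le hx).2 <|
      IntegrableOn.continuousOn_mul (Complex.continuous_conj.comp_continuousOn
        (hu.continuousOn.mono hIcc)) (hu.integrableOn_mul hV x) isCompact_Icc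
  have h₂ : IntervalIntegrable (fun t => conj (u' t) * u' t) volume 0 x :=
    ((Complex.continuous_conj.comp_continuousOn ((hu.continuousOn_deriv hV).mono hIcc)).mul
      ((hu.continuousOn_deriv hV).mono hIcc)).intervalIntegrable_of_Icc hx
  rw [hu.conj_mul_deriv hV hx, Complex.add_im, ← RCLike.im_to_complex,
    ← intervalIntegral.intervalIntegral_im h₁, ← RCLike.im_to_complex,
    ← intervalIntegral.intervalIntegral_im h₂]
  simp_rw [RCLike.im_to_complex, Complex.im_conj_mul_sub_mul_self, Complex.conj_mul']
  simp [← Complex.ofReal_pow, intervalIntegral.integral_neg, intervalIntegral.integral_const_mul]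

theorem ne_zero (hz : 0 < z.im) {x : ℝ} (hx : 0 < x) : u x ≠ 0 := by
  intro h0
  have h := hu.im_conj_mul_deriv hV hx.le
  rw [h0, map_zero, zero_mul, Complex.zero_im, eq_comm, neg_eq_zero] at h
  exact (mul_pos hz (hu.integral_sq_norm_pos hx)).ne' h

theorem mul_integral_sq_norm_le {x : ℝ} (hx : 0 ≤ x) :
    z.im * ∫ t in 0..x, ‖u t‖ ^ 2 ≤ ‖u x‖ * ‖u' x‖ :=
  calc z.im * ∫ t in 0..x, ‖u t‖ ^ 2 = -(conj (u x) * u' x).im := by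
        rw [hu.im_conj_mul_deriv hV hx, neg_neg]
    _ ≤ ‖conj (u x) * u' x‖ := (neg_le_abs _).trans (Complex.abs_im_le_norm _)
    _ = ‖u x‖ * ‖u' x‖ := by rw [norm_mul, Complex.norm_conj]

section LocalEstimates

variable {C : ℝ} (hC : ∀ a, 0 ≤ a → ∫ t in a..a + 1, |V t| ≤ C)
include hC

theorem norm_deriv_sub_deriv_le {a b S s t : ℝ} (ha : 0 ≤ a) (hab : a ≤ b) (hb : b ≤ a + 1)
    (hS : ∀ r ∈ Icc a b, ‖u r‖ ≤ S) (hs : s ∈ Icc a b) (ht : t ∈ Icc a b) :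
    ‖u' s - u' t‖ ≤ (C + ‖z‖) * S := by
  have hS0 : 0 ≤ S := (norm_nonneg _).trans (hS a (left_mem_Icc.2 hab))
  have hg : IntegrableOn (fun r => ((V r : ℂ) - z) * u r) (Ioc a b) :=
    (hu.integrableOn_mul hV b).mono_set (Ioc_subset_Icc_self.trans (Icc_subset_Icc_left ha))
  have hVunit : IntervalIntegrable (fun r => |V r|) volume a (a + 1) := by
    simpa only [Real.norm_eq_abs] using
      (intervalIntegrable_iff_integrableOn_Icc_of_le (by linarith)).2
        (IntegrableOn.mono_set (hV (a + 1)).norm (Icc_subset_Icc_left ha))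
  have hVab_int : IntervalIntegrable (fun r => |V r|) volume a b :=
    hVunit.mono_set (uIcc_subset_uIcc left_mem_uIcc (mem_uIcc_of_le hab hb))
  have hVab : ∫ r in a..b, |V r| ≤ C :=
    (intervalIntegral.integral_mono_interval le_rfl hab hb
      (.of_forall fun _ => abs_nonneg _) hVunit).trans (hC a ha)
  rw [hu.deriv_sub_deriv_eq_integral hV (ha.trans ht.1) (ha.trans hs.1)]
  calc ‖∫ r in t..s, ((V r : ℂ) - z) * u r‖
      ≤ ∫ r in a..b, ‖((V r : ℂ) - z) * u r‖ :=
        norm_integral_le_integral_norm_of_mem_Icc hg hab ht hs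
    _ ≤ ∫ r in a..b, (|V r| + ‖z‖) * S := by
        refine intervalIntegral.integral_mono_on hab
          ((intervalIntegrable_iff_integrableOn_Ioc_of_le hab).2 hg.norm) ?_ fun r hr => ?_
        · exact (hVab_int.add intervalIntegrable_const).mul_const S
        · rw [norm_mul]
          refine mul_le_mul ((norm_sub_le _ _).trans_eq ?_) (hS r hr) (norm_nonneg _)
            (by positivity)
          rw [Complex.norm_real, Real.norm_eq_abs]
    _ = ((∫ r in a..b, |V r|) + (b - a) * ‖z‖) * S := by
        rw [intervalIntegral.integral_mul_const,
          intervalIntegral.integral_add hVab_int intervalIntegrable_const,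
          intervalIntegral.integral_const, smul_eq_mul]
    _ ≤ (C + ‖z‖) * S := by
        gcongr
        nlinarith [norm_nonneg z]

theorem norm_deriv_le {x S t : ℝ} (hx : 2⁻¹ ≤ x) (hS : ∀ r ∈ Icc (x - 2⁻¹) x, ‖u r‖ ≤ S)
    (ht : t ∈ Icc (x - 2⁻¹) x) : ‖u' t‖ ≤ (4 + C + ‖z‖) * S := by
  have ha : 0 ≤ x - 2⁻¹ := by linarith
  have h := sub_mul_norm_le_of_integral_eq_sub (t := t) (by linarith)
    (hu.intervalIntegrable_deriv hV ha (by linarith))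
    (hu.integral_deriv_eq_sub hV ha (by linarith)) (hS _ (left_mem_Icc.2 (by linarith)))
    (hS _ (right_mem_Icc.2 (by linarith)))
    fun s hs => hu.norm_deriv_sub_deriv_le hV hC ha (by linarith) (by linarith) hS hs ht
  rw [sub_sub_cancel] at h
  linarith

theorem sq_norm_deriv_le_integral {x : ℝ} (hx : 2⁻¹ ≤ x) :
    ‖u' x‖ ^ 2 ≤ 8 * (4 + C + ‖z‖) ^ 3 * ∫ t in x - 2⁻¹..x, ‖u t‖ ^ 2 := by
  set K := 4 + C + ‖z‖
  have hK : 4 ≤ K := by linarith [norm_nonneg z, nonneg_of_forall_integral_abs_le hC]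
  have hJ : Icc (x - 2⁻¹) x ⊆ Ici 0 := fun r hr => mem_Ici.2 (by linarith [hr.1])
  obtain ⟨t₀, ht₀, hmax⟩ := isCompact_Icc.exists_isMaxOn (nonempty_Icc.2 (by linarith))
    (hu.continuousOn.mono hJ).norm
  have hu' : ∀ t ∈ Icc (x - 2⁻¹) x, ‖u' t‖ ≤ K * ‖u t₀‖ := fun t ht =>
    hu.norm_deriv_le hV hC hx (fun r hr => hmax hr) ht
  have hδ : (2 * K)⁻¹ ≤ x - (x - 2⁻¹) := by
    rw [sub_sub_cancel]; exact inv_anti₀ (by norm_num) (by linarith)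
  have hMδ : K * ‖u t₀‖ * (2 * K)⁻¹ ≤ ‖u t₀‖ / 2 := by field_simp; rfl
  have hlow := mul_sq_le_integral_sq_norm ht₀ (by positivity) hδ (hu.continuousOn.mono hJ)
    (fun a ha b hb => hu.integral_deriv_eq_sub hV (hJ ha) (hJ hb)) hu' hMδ
  calc ‖u' x‖ ^ 2 ≤ (K * ‖u t₀‖) ^ 2 :=
        pow_le_pow_left₀ (norm_nonneg _) (hu' x (right_mem_Icc.2 (by linarith))) 2
    _ = 8 * K ^ 3 * ((2 * K)⁻¹ * (‖u t₀‖ / 2) ^ 2) := by field_simp; ring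
    _ ≤ 8 * K ^ 3 * ∫ t in x - 2⁻¹..x, ‖u t‖ ^ 2 := by gcongr

theorem norm_deriv_le_mul_norm (hz : 0 < z.im) {x : ℝ} (hx : 2⁻¹ ≤ x) :
    ‖u' x‖ ≤ 8 * (4 + C + ‖z‖) ^ 3 / z.im * ‖u x‖ := by
  set B := 8 * (4 + C + ‖z‖) ^ 3
  have hB : 0 ≤ B := by
    have := nonneg_of_forall_integral_abs_le hC
    positivity
  have hsq : ‖u' x‖ * ‖u' x‖ ≤ B / z.im * ‖u x‖ * ‖u' x‖ :=
    calc ‖u' x‖ * ‖u' x‖ ≤ B * ∫ t in x - 2⁻¹..x, ‖u t‖ ^ 2 := by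
          rw [← sq]; exact hu.sq_norm_deriv_le_integral hV hC hx
      _ ≤ B * ∫ t in 0..x, ‖u t‖ ^ 2 := by
          refine mul_le_mul_of_nonneg_left ?_ hB
          exact intervalIntegral.integral_mono_interval (by linarith) (by linarith) le_rfl
            (.of_forall fun _ => by positivity) (hu.intervalIntegrable_sq_norm le_rfl (by linarith))
      _ = B / z.im * (z.im * ∫ t in 0..x, ‖u t‖ ^ 2) := by field_simp
      _ ≤ B / z.im * ‖u x‖ * ‖u' x‖ := by
          rw [mul_assoc]
          exact mul_le_mul_of_nonneg_left (hu.mul_integral_sq_norm_le hV (by linarith))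
            (div_nonneg hB hz.le)
  rcases (norm_nonneg (u' x)).eq_or_lt with h | h
  · rw [← h]; positivity
  · exact le_of_mul_le_mul_right hsq h

end LocalEstimates

end IsDirichlet

theorem bounded_log_derivative_general (V : ℝ → ℝ)
    (hVloc : ∀ x : ℝ, MeasureTheory.IntegrableOn V (Set.Icc 0 x))
    (hVbdd : ∃ C : ℝ, ∀ x : ℝ, 0 ≤ x → (∫ t in x..(x + 1), |V t|) ≤ C)
    (z : ℂ) (hz : 0 < z.im)
    (u u' : ℝ → ℂ) (hu : IsDirichlet V z u u') :
    (∀ x : ℝ, 0 < x → u x ≠ 0) ∧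
    ∃ B : ℝ, ∀ x : ℝ, 1 ≤ x → ‖u' x / u x‖ ≤ B := by
  obtain ⟨C, hC⟩ := hVbdd
  refine ⟨fun x hx => hu.ne_zero hVloc hz hx, 8 * (4 + C + ‖z‖) ^ 3 / z.im, fun x hx => ?_⟩
  rw [norm_div, div_le_iff₀ (norm_pos_iff.2 (hu.ne_zero hVloc hz (by linarith)))]
  exact hu.norm_deriv_le_mul_norm hVloc hC hz (by linarith)

/-- for a uniformly locally integrable potential and `Im z > 0`, the
Dirichlet solution satisfies `u(x,z) ≠ 0` for all `x > 0` and
`sup_{x ≥ 1} |(∂ₓu)(x,z)/u(x,z)| < ∞`. -/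
theorem bounded_log_derivative (V : ℝ → ℝ) (hVmeas : Measurable V)
    (hVloc : ∀ x : ℝ, MeasureTheory.IntegrableOn V (Set.Icc 0 x))
    (hVbdd : ∃ C : ℝ, ∀ x : ℝ, 0 ≤ x → (∫ t in x..(x + 1), |V t|) ≤ C)
    (z : ℂ) (hz : 0 < z.im)
    (u u' : ℝ → ℂ) (hu : IsDirichlet V z u u') :
    (∀ x : ℝ, 0 < x → u x ≠ 0) ∧
    ∃ B : ℝ, ∀ x : ℝ, 1 ≤ x → ‖u' x / u x‖ ≤ B :=
  bounded_log_derivative_general V hVloc hVbdd z hz u u' hu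
end

section
/- Fix a ∈ ℝ and δ ∈ (0,π/2), and let T = { λ ∈ ℂ : π/2 − δ/2 ≤ arg λ ≤ π/2 + δ/2 }. Let f : ℂ₊ → ℂ be analytic with Im f(λ) ≥ 0 for all λ ∈ ℂ₊. Assume that f(λ) − λ + a/(2λ) = O(|λ|^{−2}) as |λ| → ∞ along each of the two rays arg λ = π/2 − δ/2 and arg λ = π/2 + δ/2, and that f(λ) = O(|λ|^{−1}) as λ → 0 with λ ∈ T. Then f(λ) − λ + a/(2λ) = O(|λ|^{−2}) as |λ| → ∞ with λ ∈ T. -/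
/-!
Put `g z = z ^ 2 * (f z - z + a / (2 * z))`; the claim is that `g` is bounded on the sector.
On the two bounding rays `g` is bounded: near `0` by the bound on `f` there, far out by the ray
asymptotics, and in between by compactness. Inside the sector `g` grows at most like `‖z‖ ^ 3`:
Borel–Carathéodory applied to `I * f`, whose real part is `≤ 0`, gives the Harnack-type bound
`‖f z‖ ≤ K * ‖f w‖` for `‖z‖ = ‖w‖` in the sector, and `‖f w‖ = O(‖w‖)` on a ray.
Phragmén–Lindelöf on the sector, which `log` turns into a horizontal strip, then bounds `g`
everywhere by its bound on the rays.
-/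

open Complex Metric Set Filter Topology
open scoped Real

theorem norm_le_of_re_nonpos_on_ball {f : ℂ → ℂ} {c z : ℂ} {r R : ℝ}
    (hd : DifferentiableOn ℂ f (ball c R)) (hre : MapsTo f (ball c R) {w | w.re ≤ 0})
    (hz : dist z c ≤ r) (hr : r < R) :
    ‖f z‖ ≤ (R + r) / (R - r) * ‖f c‖ := by
  set s := dist z c
  have hs : 0 ≤ s := dist_nonneg
  have hR : 0 < R := hs.trans_lt (hz.trans_lt hr)
  have hzc : z - c ∈ ball (0 : ℂ) R := by
    rw [mem_ball_zero_iff, ← dist_eq_norm]; exact hz.trans_lt hr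
  have hshift : DifferentiableOn ℂ (fun u ↦ f (u + c)) (ball 0 R) :=
    hd.comp (by fun_prop) fun u hu ↦ by simpa [dist_eq_norm] using hu
  -- Borel–Carathéodory holds for every bound `M > 0` on the real part; let `M → 0`.
  have hBC : ∀ M > 0, ‖f z‖ ≤ 2 * M * s / (R - s) + ‖f c‖ * (R + s) / (R - s) := by
    intro M hM
    have := borelCaratheodory hM hshift
      (fun u hu ↦ (hre (by simpa [dist_eq_norm] using hu)).trans hM.le) hR hzc
    simpa [← dist_eq_norm, s] using this
  have hlim : Tendsto (fun M ↦ 2 * M * s / (R - s) + ‖f c‖ * (R + s) / (R - s)) (𝓝[>] 0)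
      (𝓝 (‖f c‖ * (R + s) / (R - s))) := by
    have : Continuous fun M : ℝ ↦ 2 * M * s / (R - s) + ‖f c‖ * (R + s) / (R - s) := by
      fun_prop
    simpa using (this.tendsto 0).mono_left nhdsWithin_le_nhds
  calc ‖f z‖ ≤ ‖f c‖ * (R + s) / (R - s) :=
        ge_of_tendsto hlim (eventually_nhdsWithin_of_forall hBC)
    _ = (R + s) / (R - s) * ‖f c‖ := by ring
    _ ≤ (R + r) / (R - r) * ‖f c‖ := by
        gcongr
        linarith

theorem norm_le_of_im_nonneg_of_dist_le {f : ℂ → ℂ} {c z : ℂ} {r R : ℝ}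
    (hd : DifferentiableOn ℂ f {w | 0 < w.im}) (him : ∀ w, 0 < w.im → 0 ≤ (f w).im)
    (hRc : R ≤ c.im) (hz : dist z c ≤ r) (hr : r < R) :
    ‖f z‖ ≤ (R + r) / (R - r) * ‖f c‖ := by
  have hball : ball c R ⊆ {w | 0 < w.im} := fun w hw ↦ by
    have := (abs_im_le_norm (w - c)).trans_lt (mem_ball_iff_norm.mp hw)
    rw [sub_im, abs_lt] at this
    show 0 < w.im
    linarith
  have hre : MapsTo (fun w ↦ I * f w) (ball c R) {w | w.re ≤ 0} := fun w hw ↦ by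
    simpa using him w (hball hw)
  simpa using norm_le_of_re_nonpos_on_ball ((hd.mono hball).const_mul I) hre hz hr

theorem dist_ofReal_mul_exp_le (ρ α β : ℝ) (hρ : 0 ≤ ρ) :
    dist ((ρ : ℂ) * exp (β * I)) (ρ * exp (α * I)) ≤ ρ * |β - α| := by
  have : (ρ : ℂ) * exp (β * I) - ρ * exp (α * I) =
      ρ * exp (α * I) * (exp (I * ↑(β - α)) - 1) := by
    rw [mul_sub, mul_one, mul_assoc, ← exp_add]
    push_cast
    ring_nf
  rw [dist_eq_norm, this, norm_mul, norm_mul, norm_real, norm_exp_ofReal_mul_I, mul_one,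
    Real.norm_of_nonneg hρ]
  gcongr
  simpa using Real.norm_exp_I_mul_ofReal_sub_one_le (x := β - α)

theorem seven_div_ten_lt_sin {α : ℝ} (hα : α ∈ Icc (π / 4) (3 * π / 4)) :
    7 / 10 < Real.sin α := by
  have hcos : Real.cos (π / 4) ≤ Real.cos |α - π / 2| :=
    Real.cos_le_cos_of_nonneg_of_le_pi (abs_nonneg _) (by linarith [Real.pi_pos])
      (abs_le.mpr ⟨by linarith [hα.1], by linarith [hα.2]⟩)
  rw [Real.cos_abs, Real.cos_sub_pi_div_two, Real.cos_pi_div_four] at hcos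
  nlinarith [Real.sq_sqrt (show (0 : ℝ) ≤ 2 by norm_num), Real.sqrt_nonneg 2]

-- A disc of radius `7ρ/10` about `ρ e^{iα}` lies in the upper half-plane and contains `ρ e^{iβ}`
-- at distance `≤ 2ρ/5`; hence `11/3 = (7/10 + 2/5) / (7/10 - 2/5)`.
theorem norm_le_of_im_nonneg_of_abs_sub_le {f : ℂ → ℂ}
    (hd : DifferentiableOn ℂ f {w | 0 < w.im}) (him : ∀ w, 0 < w.im → 0 ≤ (f w).im)
    {ρ α β : ℝ} (hρ : 0 < ρ) (hα : α ∈ Icc (π / 4) (3 * π / 4)) (hβ : |β - α| ≤ π / 8) :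
    ‖f (ρ * exp (β * I))‖ ≤ 11 / 3 * ‖f (ρ * exp (α * I))‖ := by
  have hR : 7 / 10 * ρ ≤ (ρ * exp (α * I)).im := by
    rw [im_ofReal_mul, exp_ofReal_mul_I_im]
    nlinarith [seven_div_ten_lt_sin hα]
  have hdist : dist ((ρ : ℂ) * exp (β * I)) (ρ * exp (α * I)) ≤ 2 / 5 * ρ := by
    refine (dist_ofReal_mul_exp_le ρ α β hρ.le).trans ?_
    nlinarith [Real.pi_lt_d2]
  convert norm_le_of_im_nonneg_of_dist_le hd him hR hdist (by linarith) using 2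
  field_simp
  norm_num

theorem norm_le_of_im_nonneg_of_norm_eq {f : ℂ → ℂ}
    (hd : DifferentiableOn ℂ f {w | 0 < w.im}) (him : ∀ w, 0 < w.im → 0 ≤ (f w).im)
    {z w : ℂ} (hzw : ‖z‖ = ‖w‖) (hz : arg z ∈ Icc (π / 4) (3 * π / 4))
    (hw : arg w ∈ Icc (π / 4) (3 * π / 4)) :
    ‖f z‖ ≤ (11 / 3) ^ 4 * ‖f w‖ := by
  have hρ : 0 < ‖w‖ := norm_pos_iff.mpr fun h ↦ by
    rw [h, arg_zero] at hw; linarith [hw.1, Real.pi_pos]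
  set γ : ℕ → ℝ := fun k ↦ arg w + k * ((arg z - arg w) / 4)
  have hγ : ∀ k ≤ 4, γ k ∈ Icc (π / 4) (3 * π / 4) := fun k hk ↦ by
    have hk4 : (k : ℝ) ≤ 4 := by exact_mod_cast hk
    have hk0 : (0 : ℝ) ≤ k := k.cast_nonneg
    simp only [γ]
    constructor <;> nlinarith [hz.1, hz.2, hw.1, hw.2]
  have hchain : ∀ k ≤ 4,
      ‖f (‖w‖ * exp (γ k * I))‖ ≤ (11 / 3) ^ k * ‖f (‖w‖ * exp (γ 0 * I))‖ := by
    intro k hk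
    induction k with
    | zero => simp
    | succ k ih =>
      have hstep : |γ (k + 1) - γ k| ≤ π / 8 := by
        simp only [γ, Nat.cast_succ]
        rw [abs_le]
        constructor <;> nlinarith [hz.1, hz.2, hw.1, hw.2]
      calc _ ≤ 11 / 3 * ‖f (‖w‖ * exp (γ k * I))‖ :=
            norm_le_of_im_nonneg_of_abs_sub_le hd him hρ (hγ k (by omega)) hstep
        _ ≤ 11 / 3 * ((11 / 3) ^ k * ‖f (‖w‖ * exp (γ 0 * I))‖) := by
            gcongr; exact ih (by omega)
        _ = _ := by ring
  have h4 := hchain 4 le_rfl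
  simp only [γ, Nat.cast_ofNat, CharP.cast_eq_zero, zero_mul, add_zero] at h4
  rwa [show arg w + 4 * ((arg z - arg w) / 4) = arg z by ring, ← hzw,
    norm_mul_exp_arg_mul_I, hzw, norm_mul_exp_arg_mul_I] at h4

theorem mul_one_add_exp_pow_le (A x : ℝ) (n : ℕ) :
    A * (1 + Real.exp x ^ n) ≤ Real.exp ((2 * |A| + n) * Real.exp |x|) := by
  have hx : Real.exp x ^ n ≤ Real.exp (n * |x|) := by
    rw [← Real.exp_nat_mul]; gcongr; exact le_abs_self x
  have h1 : 1 ≤ Real.exp (n * |x|) := Real.one_le_exp (by positivity)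
  have hA : 2 * |A| ≤ Real.exp (2 * |A|) := by linarith [Real.add_one_le_exp (2 * |A|)]
  have hlin : 2 * |A| + n * |x| ≤ (2 * |A| + n) * Real.exp |x| := by
    nlinarith [Real.add_one_le_exp |x|, abs_nonneg x, abs_nonneg A, n.cast_nonneg (α := ℝ)]
  calc A * (1 + Real.exp x ^ n) ≤ |A| * (2 * Real.exp (n * |x|)) :=
        (le_abs_self _).trans (by rw [abs_mul]; gcongr; rw [abs_of_pos (by positivity)]; linarith)
    _ ≤ Real.exp (2 * |A|) * Real.exp (n * |x|) := by nlinarith [Real.exp_pos (n * |x|)]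
    _ = Real.exp (2 * |A| + n * |x|) := (Real.exp_add _ _).symm
    _ ≤ _ := Real.exp_le_exp.mpr hlin

theorem PhragmenLindelof.sector {g : ℂ → ℂ} {θ₁ θ₂ A C : ℝ} {n : ℕ}
    (hθ₁ : 0 < θ₁) (hθ₂ : θ₂ < π) (hd : DifferentiableOn ℂ g {z | 0 < z.im})
    (hgrowth : ∀ z, arg z ∈ Icc θ₁ θ₂ → ‖g z‖ ≤ A * (1 + ‖z‖ ^ n))
    (hrays : ∀ z, arg z = θ₁ ∨ arg z = θ₂ → ‖g z‖ ≤ C) {z : ℂ} (hz : arg z ∈ Icc θ₁ θ₂) :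
    ‖g z‖ ≤ C := by
  rcases hz.1.eq_or_lt with h | hlt
  · exact hrays z (Or.inl h.symm)
  have hθ : θ₁ < θ₂ := hlt.trans_le hz.2
  have harg : ∀ w : ℂ, w.im ∈ Icc θ₁ θ₂ → arg (exp w) = w.im := fun w hw ↦ by
    rw [← log_im, log_exp (by linarith [hw.1, Real.pi_pos]) (by linarith [hw.2])]
  have hz0 : z ≠ 0 := by
    rintro rfl; rw [arg_zero] at hz; linarith [hz.1]
  -- In logarithmic coordinates the sector becomes the strip `θ₁ ≤ im w ≤ θ₂`.
  have hdiff : DifferentiableOn ℂ (g ∘ exp) (closure (im ⁻¹' Ioo θ₁ θ₂)) := by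
    rw [closure_preimage_im, closure_Ioo hθ.ne]
    refine hd.comp differentiable_exp.differentiableOn fun w hw ↦ ?_
    show 0 < (exp w).im
    rw [exp_im]
    exact mul_pos (Real.exp_pos _)
      (Real.sin_pos_of_pos_of_lt_pi (by linarith [hw.1]) (by linarith [hw.2]))
  have hgrowth' : ∃ c < π / (θ₂ - θ₁), ∃ B, (g ∘ exp) =O[comap (_root_.abs ∘ re) atTop ⊓
      𝓟 (im ⁻¹' Ioo θ₁ θ₂)] fun w ↦ Real.exp (B * Real.exp (c * |w.re|)) := by
    refine ⟨1, by rw [lt_div_iff₀ (by linarith)]; linarith, 2 * |A| + n, ?_⟩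
    refine Asymptotics.IsBigO.of_bound 1 (eventually_inf_principal.2 (Eventually.of_forall
      fun w hw ↦ ?_))
    rw [one_mul, one_mul, Real.norm_of_nonneg (Real.exp_pos _).le, Function.comp_apply]
    refine (hgrowth _ ?_).trans ?_
    · rw [harg w (Ioo_subset_Icc_self hw)]; exact Ioo_subset_Icc_self hw
    · rw [norm_exp]; exact mul_one_add_exp_pow_le A w.re n
  have hstrip := PhragmenLindelof.horizontal_strip (z := log z) hdiff.diffContOnCl hgrowth'
    (fun w hw ↦ hrays _ (Or.inl ((harg w (by simp [hw, hθ.le])).trans hw)))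
    (fun w hw ↦ hrays _ (Or.inr ((harg w (by simp [hw, hθ.le])).trans hw)))
    (by rw [log_im]; exact hz.1) (by rw [log_im]; exact hz.2)
  rwa [Function.comp_apply, exp_log hz0] at hstrip

theorem exists_bound_of_arg_mem_Icc_of_norm_mem_Icc {g : ℂ → ℂ} {θ₁ θ₂ r R : ℝ}
    (hθ₁ : 0 < θ₁) (hθ₂ : θ₂ < π) (hr : 0 < r) (hg : ContinuousOn g {z | 0 < z.im}) :
    ∃ M, ∀ z, arg z ∈ Icc θ₁ θ₂ → ‖z‖ ∈ Icc r R → ‖g z‖ ≤ M := by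
  set K := (fun p : ℝ × ℝ ↦ (p.1 : ℂ) * exp (p.2 * I)) '' (Icc r R ×ˢ Icc θ₁ θ₂)
  have hK : IsCompact K := (isCompact_Icc.prod isCompact_Icc).image (by fun_prop)
  have hKsub : K ⊆ {z | 0 < z.im} := by
    rintro _ ⟨⟨ρ, θ⟩, ⟨hρ, hθ⟩, rfl⟩
    show 0 < ((ρ : ℂ) * exp (θ * I)).im
    rw [im_ofReal_mul, exp_ofReal_mul_I_im]
    exact mul_pos (hr.trans_le hρ.1)
      (Real.sin_pos_of_pos_of_lt_pi (by linarith [hθ.1]) (by linarith [hθ.2]))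
  obtain ⟨M, hM⟩ := hK.exists_bound_of_continuousOn (hg.mono hKsub)
  exact ⟨M, fun z hz hρ ↦ hM z ⟨(‖z‖, arg z), ⟨hρ, hz⟩, norm_mul_exp_arg_mul_I z⟩⟩

noncomputable def rescaledRemainder (f : ℂ → ℂ) (a : ℝ) (z : ℂ) : ℂ :=
  z ^ 2 * (f z - z + a / (2 * z))

section rescaledRemainder

variable {f : ℂ → ℂ} {a : ℝ}

theorem norm_rescaledRemainder_le_iff {z : ℂ} (hz : z ≠ 0) {C : ℝ} :
    ‖rescaledRemainder f a z‖ ≤ C ↔ ‖f z - z + a / (2 * z)‖ ≤ C / ‖z‖ ^ 2 := by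
  rw [rescaledRemainder, norm_mul, norm_pow, le_div_iff₀ (by positivity), mul_comm]

theorem norm_rescaledRemainder_le (z : ℂ) :
    ‖rescaledRemainder f a z‖ ≤ ‖z‖ ^ 2 * ‖f z‖ + ‖z‖ ^ 3 + |a| * ‖z‖ / 2 := by
  rcases eq_or_ne z 0 with rfl | hz
  · simp [rescaledRemainder]
  have hsplit : rescaledRemainder f a z = z ^ 2 * f z - z ^ 3 + a / 2 * z := by
    rw [rescaledRemainder]; field_simp
  rw [hsplit]
  refine (norm_add_le _ _).trans (add_le_add ((norm_sub_le _ _).trans_eq ?_) (le_of_eq ?_))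
  · rw [norm_mul, norm_pow, norm_pow]
  · rw [norm_mul, norm_div, norm_real, Real.norm_eq_abs, RCLike.norm_ofNat]; ring

theorem differentiableOn_rescaledRemainder (hf : DifferentiableOn ℂ f {z | 0 < z.im}) :
    DifferentiableOn ℂ (rescaledRemainder f a) {z | 0 < z.im} := by
  refine (differentiableOn_pow 2).mul ((hf.sub differentiableOn_id).add
    ((differentiableOn_const _).div (differentiableOn_id.const_mul 2) fun z hz ↦ ?_))
  exact mul_ne_zero two_ne_zero fun h ↦ by simp [h] at hz

theorem exists_bound_rescaledRemainder {θ₁ θ₂ : ℝ} (hθ₁ : 0 < θ₁) (hθ₂ : θ₂ < π)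
    (hf : DifferentiableOn ℂ f {z | 0 < z.im})
    (h0 : ∃ C₂ r₀ : ℝ, 0 < r₀ ∧ ∀ z, arg z ∈ Icc θ₁ θ₂ → ‖z‖ ≤ r₀ → ‖f z‖ ≤ C₂ / ‖z‖) (R : ℝ) :
    ∃ M, ∀ z, arg z ∈ Icc θ₁ θ₂ → ‖z‖ ≤ R → ‖rescaledRemainder f a z‖ ≤ M := by
  obtain ⟨C₂, r₀, hr₀, h0⟩ := h0
  obtain ⟨M, hM⟩ := exists_bound_of_arg_mem_Icc_of_norm_mem_Icc (R := R) hθ₁ hθ₂ hr₀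
    (differentiableOn_rescaledRemainder (a := a) hf).continuousOn
  refine ⟨max M (|C₂| * r₀ + r₀ ^ 3 + |a| * r₀ / 2), fun z hz hzR ↦ ?_⟩
  rcases le_total ‖z‖ r₀ with hzr | hzr
  · refine le_max_of_le_right ((norm_rescaledRemainder_le z).trans ?_)
    have hz0 : 0 < ‖z‖ := norm_pos_iff.mpr fun h ↦ by
      rw [h, arg_zero] at hz; linarith [hz.1]
    have hfz : ‖z‖ ^ 2 * ‖f z‖ ≤ |C₂| * r₀ := calc
      ‖z‖ ^ 2 * ‖f z‖ ≤ ‖z‖ ^ 2 * (C₂ / ‖z‖) := by gcongr; exact h0 z hz hzr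
      _ = C₂ * ‖z‖ := by field_simp
      _ ≤ |C₂| * r₀ := by gcongr; exact le_abs_self C₂
    gcongr
  · exact le_max_of_le_left (hM z hz ⟨hzr, hzR⟩)

theorem norm_le_mul_norm_of_im_nonneg (hf : DifferentiableOn ℂ f {z | 0 < z.im})
    (hherg : ∀ z, 0 < z.im → 0 ≤ (f z).im) {α C₁ R₁ : ℝ} (hα : α ∈ Icc (π / 4) (3 * π / 4))
    (hray : ∀ w, arg w = α → R₁ ≤ ‖w‖ → ‖f w - w + a / (2 * w)‖ ≤ C₁ / ‖w‖ ^ 2)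
    {z : ℂ} (hz : arg z ∈ Icc (π / 4) (3 * π / 4)) (hzR : max R₁ 1 ≤ ‖z‖) :
    ‖f z‖ ≤ (11 / 3) ^ 4 * (|C₁| + |a| + 1) * ‖z‖ := by
  set ρ := ‖z‖
  have hρ1 : 1 ≤ ρ := le_of_max_le_right hzR
  set w : ℂ := ρ * exp (α * I)
  have hw : ‖w‖ = ρ := by
    rw [norm_mul, norm_real, norm_exp_ofReal_mul_I, mul_one, Real.norm_of_nonneg (norm_nonneg z)]
  have hwarg : arg w = α := by
    rw [arg_real_mul _ (by linarith), exp_mul_I,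
      arg_cos_add_sin_mul_I ⟨by linarith [hα.1, Real.pi_pos], by linarith [hα.2, Real.pi_pos]⟩]
  have hE : ‖f w - w + a / (2 * w)‖ ≤ |C₁| := calc
    _ ≤ C₁ / ρ ^ 2 := hw ▸ hray w hwarg (hw ▸ le_of_max_le_left hzR)
    _ ≤ |C₁| / ρ ^ 2 := by gcongr; exact le_abs_self C₁
    _ ≤ |C₁| := div_le_self (abs_nonneg _) (one_le_pow₀ hρ1)
  have ha : ‖(a : ℂ) / (2 * w)‖ ≤ |a| := by
    rw [norm_div, norm_mul, hw, norm_real, Real.norm_eq_abs, RCLike.norm_ofNat]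
    exact div_le_self (abs_nonneg a) (by linarith)
  have hfw : ‖f w‖ ≤ (|C₁| + |a| + 1) * ρ := calc
    ‖f w‖ = ‖(f w - w + a / (2 * w)) + w - a / (2 * w)‖ := by ring_nf
    _ ≤ ‖f w - w + a / (2 * w)‖ + ‖w‖ + ‖(a : ℂ) / (2 * w)‖ :=
        norm_sub_le_of_le (norm_add_le _ _) le_rfl
    _ ≤ |C₁| + ρ + |a| := by rw [hw]; linarith
    _ ≤ (|C₁| + |a| + 1) * ρ := by nlinarith [abs_nonneg C₁, abs_nonneg a]
  calc ‖f z‖ ≤ (11 / 3) ^ 4 * ‖f w‖ :=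
        norm_le_of_im_nonneg_of_norm_eq hf hherg hw.symm hz (hwarg ▸ hα)
    _ ≤ (11 / 3) ^ 4 * ((|C₁| + |a| + 1) * ρ) := by gcongr
    _ = _ := by ring

theorem norm_rescaledRemainder_le_mul_one_add_pow {s : Set ℂ} {R K M : ℝ} (hR : 1 ≤ R)
    (hbig : ∀ z ∈ s, R ≤ ‖z‖ → ‖f z‖ ≤ K * ‖z‖)
    (hsmall : ∀ z ∈ s, ‖z‖ ≤ R → ‖rescaledRemainder f a z‖ ≤ M) :
    ∀ z ∈ s, ‖rescaledRemainder f a z‖ ≤ (|M| + |K| + 1 + |a|) * (1 + ‖z‖ ^ 3) := by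
  intro z hz
  have hρ := norm_nonneg z
  rcases le_total ‖z‖ R with hzR | hzR
  · nlinarith [hsmall z hz hzR, le_abs_self M, abs_nonneg K, abs_nonneg a, abs_nonneg M,
      pow_nonneg hρ 3]
  · have hρ1 : 1 ≤ ‖z‖ := hR.trans hzR
    have hf := hbig z hz hzR
    have h1 : ‖z‖ ≤ ‖z‖ ^ 3 := le_self_pow₀ hρ1 (by norm_num)
    have h2 : ‖z‖ ^ 2 * ‖f z‖ ≤ |K| * ‖z‖ ^ 3 := by
      nlinarith [le_abs_self K, pow_nonneg hρ 2]
    nlinarith [norm_rescaledRemainder_le (f := f) (a := a) z, abs_nonneg a, abs_nonneg M,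
      abs_nonneg K, pow_nonneg hρ 3]

end rescaledRemainder

/-- Phragmén–Lindelöf step: let `T` be the sector
`{λ : arg λ ∈ [π/2 − δ/2, π/2 + δ/2]}` and `f` Herglotz. If
`f(λ) − λ + a/(2λ) = O(|λ|⁻²)` along the two bounding rays of `T` and `f(λ) = O(|λ|⁻¹)`
as `λ → 0` in `T`, then `f(λ) − λ + a/(2λ) = O(|λ|⁻²)` as `λ → ∞` in `T`. -/
theorem phragmen_lindelof_sector (a : ℝ) (δ : ℝ) (hδ : δ ∈ Set.Ioo 0 (Real.pi / 2))
    (f : ℂ → ℂ)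
    (hf : DifferentiableOn ℂ f {z : ℂ | 0 < z.im})
    (hherg : ∀ z : ℂ, 0 < z.im → 0 ≤ (f z).im)
    (hrays : ∃ C₁ R₁ : ℝ, 0 < R₁ ∧ ∀ r θ : ℝ, R₁ ≤ r →
      (θ = Real.pi / 2 - δ / 2 ∨ θ = Real.pi / 2 + δ / 2) →
      ‖f ((r : ℂ) * Complex.exp ((θ : ℂ) * Complex.I)) -
          (r : ℂ) * Complex.exp ((θ : ℂ) * Complex.I) +
          (a : ℂ) / (2 * ((r : ℂ) * Complex.exp ((θ : ℂ) * Complex.I)))‖ ≤ C₁ / r ^ 2)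
    (h0 : ∃ C₂ r₀ : ℝ, 0 < r₀ ∧ ∀ z : ℂ,
      Complex.arg z ∈ Set.Icc (Real.pi / 2 - δ / 2) (Real.pi / 2 + δ / 2) →
      ‖z‖ ≤ r₀ → ‖f z‖ ≤ C₂ / ‖z‖) :
    ∃ C R : ℝ, 0 < R ∧ ∀ z : ℂ,
      Complex.arg z ∈ Set.Icc (Real.pi / 2 - δ / 2) (Real.pi / 2 + δ / 2) →
      R ≤ ‖z‖ → ‖f z - z + (a : ℂ) / (2 * z)‖ ≤ C / ‖z‖ ^ 2 := by
  obtain ⟨C₁, R₁, hR₁, hrays⟩ := hrays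
  have hθ₁ : 0 < π / 2 - δ / 2 := by linarith [hδ.2, Real.pi_pos]
  have hθ₂ : π / 2 + δ / 2 < π := by linarith [hδ.2, Real.pi_pos]
  have hsector : Icc (π / 2 - δ / 2) (π / 2 + δ / 2) ⊆ Icc (π / 4) (3 * π / 4) :=
    Icc_subset_Icc (by linarith [hδ.2]) (by linarith [hδ.2])
  have hray : ∀ w, (arg w = π / 2 - δ / 2 ∨ arg w = π / 2 + δ / 2) → R₁ ≤ ‖w‖ →
      ‖f w - w + a / (2 * w)‖ ≤ C₁ / ‖w‖ ^ 2 := fun w hw hwR ↦ by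
    simpa only [norm_mul_exp_arg_mul_I] using hrays ‖w‖ (arg w) hwR hw
  obtain ⟨M, hM⟩ := exists_bound_rescaledRemainder (a := a) hθ₁ hθ₂ hf h0 (max R₁ 1)
  have hgrowth := norm_rescaledRemainder_le_mul_one_add_pow
    (s := arg ⁻¹' Icc (π / 2 - δ / 2) (π / 2 + δ / 2)) (le_max_right R₁ 1)
    (fun z hz ↦ norm_le_mul_norm_of_im_nonneg hf hherg (hsector ⟨le_rfl, by linarith [hδ.1]⟩)
      (fun w hw ↦ hray w (Or.inl hw)) (hsector hz)) hM
  refine ⟨max C₁ M, 1, one_pos, fun z hz hz1 ↦ ?_⟩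
  rw [← norm_rescaledRemainder_le_iff (norm_pos_iff.mp (one_pos.trans_le hz1))]
  refine PhragmenLindelof.sector hθ₁ hθ₂ (differentiableOn_rescaledRemainder hf) hgrowth
    (fun w hw ↦ ?_) hz
  rcases le_total R₁ ‖w‖ with hwR | hwR
  · exact ((norm_rescaledRemainder_le_iff (norm_pos_iff.mp (hR₁.trans_le hwR))).2
      (hray w hw hwR)).trans (le_max_left _ _)
  · refine (hM w ?_ (hwR.trans (le_max_left _ _))).trans (le_max_right _ _)
    rcases hw with hw | hw <;> rw [hw] <;> constructor <;> linarith [hδ.1]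
end

section
/- For δ > 0 and λ ∈ (−1,0), define the 2×2 real matrices A(δ,λ) = [[cosh(δ√(1−λ)), sinh(δ√(1−λ))/√(1−λ)], [√(1−λ)·sinh(δ√(1−λ)), cosh(δ√(1−λ))]] and B(δ,λ) = [[cos(δ√(1+λ)), sin(δ√(1+λ))/√(1+λ)], [−√(1+λ)·sin(δ√(1+λ)), cos(δ√(1+λ))]], and set Δ_δ(λ) = tr(A(δ,λ)·B(δ,λ)). Then there exist C > 0 and δ₀ > 0 such that for all δ ∈ (0,δ₀) and all λ ∈ (−1,0): | Δ_δ(λ) − 2 + 4λδ² | ≤ C δ³. -/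
/-!
Put `a = δ√(1-λ)` and `b = δ√(1+λ)`. Multiplying out the trace gives
`Δ_δ(λ) = 2 cosh a cos b - 2λ sinh a sin b / (√(1-λ)√(1+λ))`, and
`a² + b² = 2δ²`, `a² - b² = -2λδ²`, `ab = δ²√(1-λ)√(1+λ)`.
The Taylor bounds `cosh a = 1 + a²/2 + O(a⁴)`, `cos b = 1 - b²/2 + O(b⁴)`,
`sinh a = a + O(a³)`, `sin b = b + O(b³)` then give
`2 cosh a cos b = 2 - 2λδ² + O(δ⁴)` and `sinh a sin b = δ²√(1-λ)√(1+λ) (1 + O(δ²))`,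
so `Δ_δ(λ) = 2 - 4λδ² + O(δ⁴)` uniformly in `λ ∈ (-1, 1)`.
-/

/-- Transfer matrix over `[0,δ]` for the constant potential `+1` at energy `λ ∈ (−1,0)`. -/
noncomputable def Amat (δ lam : ℝ) : Matrix (Fin 2) (Fin 2) ℝ :=
  !![Real.cosh (δ * Real.sqrt (1 - lam)),
      Real.sinh (δ * Real.sqrt (1 - lam)) / Real.sqrt (1 - lam);
    Real.sqrt (1 - lam) * Real.sinh (δ * Real.sqrt (1 - lam)),
      Real.cosh (δ * Real.sqrt (1 - lam))]

/-- Transfer matrix over `[δ,2δ]` for the constant potential `−1` at energy `λ ∈ (−1,0)`. -/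
noncomputable def Bmat (δ lam : ℝ) : Matrix (Fin 2) (Fin 2) ℝ :=
  !![Real.cos (δ * Real.sqrt (1 + lam)),
      Real.sin (δ * Real.sqrt (1 + lam)) / Real.sqrt (1 + lam);
    -(Real.sqrt (1 + lam) * Real.sin (δ * Real.sqrt (1 + lam))),
      Real.cos (δ * Real.sqrt (1 + lam))]

/-- The discriminant `Δ_δ(λ) = tr(A(δ,λ)·B(δ,λ))` of the `2δ`-periodic square-wave
potential at energy `λ`. -/
noncomputable def discr (δ lam : ℝ) : ℝ := Matrix.trace (Amat δ lam * Bmat δ lam)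

open Real

lemma abs_cosh_sub_le {x : ℝ} (hx : |x| ≤ 1) :
    |cosh x - (1 + x ^ 2 / 2)| ≤ |x| ^ 4 * (5 / 96) := by
  have h := Complex.cos_bound (x := x * Complex.I) (by simpa using hx)
  rw [Complex.cos_mul_I] at h
  have : Complex.cosh x - (1 - (x * Complex.I) ^ 2 / 2) = ((cosh x - (1 + x ^ 2 / 2) : ℝ) : ℂ) := by
    push_cast; ring_nf; rw [Complex.I_sq]; ring
  rw [this] at h
  simpa only [norm_mul, Complex.norm_I, mul_one, Complex.norm_real, Real.norm_eq_abs] using h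

lemma abs_sinh_sub_le {x : ℝ} (hx : |x| ≤ 1) : |sinh x - x| ≤ |x| ^ 3 / 5 := by
  have h := Complex.sin_bound (x := x * Complex.I) (by simpa using hx)
  rw [Complex.sin_mul_I] at h
  have : Complex.sinh x * Complex.I - (x * Complex.I - (x * Complex.I) ^ 3 / 6)
      = ((sinh x - x - x ^ 3 / 6 : ℝ) : ℂ) * Complex.I := by
    push_cast; ring_nf; rw [Complex.I_pow_three]; ring
  rw [this] at h
  simp only [norm_mul, Complex.norm_I, mul_one, Complex.norm_real, Real.norm_eq_abs] at h
  have h5 : |x| ^ 5 ≤ |x| ^ 3 := pow_le_pow_of_le_one (abs_nonneg x) hx (by norm_num)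
  calc |sinh x - x| = |(sinh x - x - x ^ 3 / 6) + x ^ 3 / 6| := by ring_nf
    _ ≤ |sinh x - x - x ^ 3 / 6| + |x ^ 3 / 6| := abs_add_le _ _
    _ ≤ |x| ^ 3 / 5 := by rw [abs_div, abs_pow]; norm_num; linarith [pow_nonneg (abs_nonneg x) 3]

lemma abs_two_mul_cosh_mul_cos_sub_le {a b : ℝ} (ha : |a| ≤ 1) (hb : |b| ≤ 1) :
    |2 * cosh a * cos b - 2 - (a ^ 2 - b ^ 2)| ≤ (a ^ 2 + b ^ 2) ^ 2 := by
  set e := cosh a - (1 + a ^ 2 / 2) with he_def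
  set f := cos b - (1 - b ^ 2 / 2) with hf_def
  have he : |e| ≤ a ^ 4 / 16 := by
    have := abs_cosh_sub_le ha
    rw [Even.pow_abs ⟨2, rfl⟩] at this; linarith [pow_nonneg (sq_nonneg a) 2]
  have hf : |f| ≤ b ^ 4 / 16 := by
    have := Real.cos_bound hb
    rw [Even.pow_abs ⟨2, rfl⟩] at this; linarith [pow_nonneg (sq_nonneg b) 2]
  have hef : |e * f| ≤ a ^ 4 * b ^ 4 / 256 := by
    rw [abs_mul]; nlinarith [abs_nonneg e, abs_nonneg f]
  have ha2 : a ^ 2 ≤ 1 := (sq_le_one_iff_abs_le_one a).2 ha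
  have hb2 : b ^ 2 ≤ 1 := (sq_le_one_iff_abs_le_one b).2 hb
  have hexp : 2 * cosh a * cos b - 2 - (a ^ 2 - b ^ 2)
      = 2 * e + 2 * f + a ^ 2 * f - b ^ 2 * e + 2 * (e * f) - a ^ 2 * b ^ 2 / 2 := by
    simp only [he_def, hf_def]; ring
  rw [hexp]
  rw [abs_le] at he hf hef ⊢
  have hab := mul_nonneg (sq_nonneg a) (sq_nonneg b)
  constructor <;> nlinarith [mul_le_mul_of_nonneg_left hb2 hab, mul_le_mul_of_nonneg_left ha2 hab,
    mul_le_mul_of_nonneg_left hf.2 (sq_nonneg a), mul_le_mul_of_nonneg_left hf.1 (sq_nonneg a),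
    mul_le_mul_of_nonneg_left he.2 (sq_nonneg b), mul_le_mul_of_nonneg_left he.1 (sq_nonneg b)]

lemma abs_sinh_mul_sin_sub_le {a b : ℝ} (ha : |a| ≤ 1) :
    |sinh a * sin b - a * b| ≤ |a * b| * (a ^ 2 + b ^ 2) := by
  have h1 : |sinh a - a| ≤ |a| ^ 3 := by
    linarith [abs_sinh_sub_le ha, pow_nonneg (abs_nonneg a) 3]
  have h2 : |b - sin b| ≤ |b| ^ 3 := by
    linarith [abs_sub_sin_le b, pow_nonneg (abs_nonneg b) 3]
  calc |sinh a * sin b - a * b| = |(sinh a - a) * sin b + a * (sin b - b)| := by ring_nf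
    _ ≤ |(sinh a - a) * sin b| + |a * (sin b - b)| := abs_add_le _ _
    _ = |sinh a - a| * |sin b| + |a| * |b - sin b| := by rw [abs_mul, abs_mul, abs_sub_comm (sin b)]
    _ ≤ |a| ^ 3 * |b| + |a| * |b| ^ 3 :=
        add_le_add (mul_le_mul h1 abs_sin_le_abs (abs_nonneg _) (by positivity))
          (mul_le_mul_of_nonneg_left h2 (abs_nonneg a))
    _ = |a * b| * (a ^ 2 + b ^ 2) := by rw [abs_mul, ← sq_abs a, ← sq_abs b]; ring

lemma discr_eq {δ lam : ℝ} (hlam : lam ∈ Set.Ioo (-1 : ℝ) 1) :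
    discr δ lam = 2 * cosh (δ * √(1 - lam)) * cos (δ * √(1 + lam))
      - 2 * lam * (sinh (δ * √(1 - lam)) * sin (δ * √(1 + lam))) / (√(1 - lam) * √(1 + lam)) := by
  obtain ⟨hl₁, hl₂⟩ := hlam
  have hs : √(1 - lam) ^ 2 = 1 - lam := sq_sqrt (by linarith)
  have ht : √(1 + lam) ^ 2 = 1 + lam := sq_sqrt (by linarith)
  have hs₀ : √(1 - lam) ≠ 0 := (sqrt_pos.2 (by linarith)).ne'
  have ht₀ : √(1 + lam) ≠ 0 := (sqrt_pos.2 (by linarith)).ne'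
  simp only [discr, Amat, Bmat, Matrix.trace_fin_two, Matrix.mul_apply, Fin.sum_univ_two,
    Matrix.of_apply, Matrix.cons_val', Matrix.cons_val_zero, Matrix.cons_val_one,
    Matrix.empty_val', Matrix.cons_val_fin_one]
  field_simp
  linear_combination sinh (δ * √(1 - lam)) * sin (δ * √(1 + lam)) * (hs - ht)

lemma abs_discr_sub_le {δ lam : ℝ} (hlam : lam ∈ Set.Ioo (-1 : ℝ) 1) (hδ : 2 * δ ^ 2 ≤ 1) :
    |discr δ lam - 2 + 4 * lam * δ ^ 2| ≤ 8 * δ ^ 4 := by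
  rw [discr_eq hlam]
  obtain ⟨hl₁, hl₂⟩ := hlam
  set s := √(1 - lam)
  set t := √(1 + lam)
  have hs : s ^ 2 = 1 - lam := sq_sqrt (by linarith)
  have ht : t ^ 2 = 1 + lam := sq_sqrt (by linarith)
  have hst : 0 < s * t := mul_pos (sqrt_pos.2 (by linarith)) (sqrt_pos.2 (by linarith))
  set a := δ * s
  set b := δ * t
  have hab : a ^ 2 + b ^ 2 = 2 * δ ^ 2 := by simp only [a, b, mul_pow, hs, ht]; ring
  have ha : |a| ≤ 1 := (sq_le_one_iff_abs_le_one a).1 (by nlinarith [sq_nonneg b])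
  have hb : |b| ≤ 1 := (sq_le_one_iff_abs_le_one b).1 (by nlinarith [sq_nonneg a])
  have hmul : a * b = δ ^ 2 * (s * t) := by ring
  have hprod : a * b / (s * t) = δ ^ 2 := by rw [hmul, mul_div_cancel_right₀ _ hst.ne']
  have hdiff : a ^ 2 - b ^ 2 = -2 * lam * δ ^ 2 := by simp only [a, b, mul_pow, hs, ht]; ring
  have hsplit : 2 * cosh a * cos b - 2 * lam * (sinh a * sin b) / (s * t) - 2 + 4 * lam * δ ^ 2
      = (2 * cosh a * cos b - 2 - (a ^ 2 - b ^ 2)) - 2 * lam * ((sinh a * sin b - a * b) / (s * t)) := by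
    rw [sub_div, hprod, hdiff]; ring
  have hquot : |(sinh a * sin b - a * b) / (s * t)| ≤ 2 * δ ^ 4 := by
    rw [abs_div, abs_of_pos hst, div_le_iff₀ hst]
    calc |sinh a * sin b - a * b| ≤ |a * b| * (a ^ 2 + b ^ 2) := abs_sinh_mul_sin_sub_le ha
      _ = 2 * δ ^ 4 * (s * t) := by
        rw [hab, hmul, abs_mul, abs_of_pos hst, abs_sq]; ring
  have hlam : |2 * lam| ≤ 2 := by rw [abs_le]; constructor <;> linarith
  calc _
      ≤ |2 * cosh a * cos b - 2 - (a ^ 2 - b ^ 2)| + |2 * lam| * |(sinh a * sin b - a * b) / (s * t)| := by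
        rw [hsplit, ← abs_mul]; exact abs_sub _ _
    _ ≤ (a ^ 2 + b ^ 2) ^ 2 + 2 * (2 * δ ^ 4) :=
        add_le_add (abs_two_mul_cosh_mul_cos_sub_le ha hb)
          (mul_le_mul hlam hquot (abs_nonneg _) zero_le_two)
    _ = 8 * δ ^ 4 := by rw [hab]; ring

/-- `Δ_δ(λ) = 2 − 4λδ² + O(δ³)` uniformly in `λ ∈ (−1,0)` as `δ ↓ 0`. -/
theorem discriminant_expansion :
    ∃ C : ℝ, 0 < C ∧ ∃ δ₀ : ℝ, 0 < δ₀ ∧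
      ∀ δ : ℝ, δ ∈ Set.Ioo 0 δ₀ → ∀ lam : ℝ, lam ∈ Set.Ioo (-1 : ℝ) 0 →
        |discr δ lam - 2 + 4 * lam * δ ^ 2| ≤ C * δ ^ 3 := by
  refine ⟨4, by norm_num, 1 / 2, by norm_num, ?_⟩
  rintro δ ⟨hδ₀, hδ₁⟩ lam ⟨hl₁, hl₂⟩
  calc |discr δ lam - 2 + 4 * lam * δ ^ 2| ≤ 8 * δ ^ 4 :=
        abs_discr_sub_le ⟨hl₁, by linarith⟩ (by nlinarith)
    _ = 8 * δ * δ ^ 3 := by ring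
    _ ≤ 4 * δ ^ 3 := by gcongr; linarith
end

section
/- For δ > 0 let W_δ : [0,2δ] → ℝ be given by W_δ(x) = 1 for x ∈ [0,δ) and W_δ(x) = −1 for x ∈ [δ,2δ). For λ ∈ ℝ let T_δ(λ) be the value at x = 2δ of the solution of the matrix initial value problem ∂_x T(x) = [[0, W_δ(x) − λ],[1, 0]] · T(x), T(0) = I, and set Δ_δ(λ) = tr T_δ(λ) and λ_δ = inf { λ ∈ ℝ : Δ_δ(λ) = 2 }. Then lim_{δ ↓ 0} λ_δ = 0. -/
open MeasureTheory Set intervalIntegral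

/-- The square-wave potential on `[0,2δ]`: equal to `1` on `[0,δ)` and `−1` on `[δ,2δ)`. -/
noncomputable def Wsq (δ x : ℝ) : ℝ := if x < δ then 1 else -1


/-- cosine-type fundamental solution of u'' = c u with u(0)=1, u'(0)=0 -/
noncomputable def cc (c x : ℝ) : ℝ :=
  if 0 ≤ c then Real.cosh (Real.sqrt c * x) else Real.cos (Real.sqrt (-c) * x)

/-- sine-type fundamental solution of u'' = c u with u(0)=0, u'(0)=1 -/
noncomputable def sc (c x : ℝ) : ℝ :=
  if 0 < c then Real.sinh (Real.sqrt c * x) / Real.sqrt c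
  else if c < 0 then Real.sin (Real.sqrt (-c) * x) / Real.sqrt (-c)
  else x

lemma cc_zero (c : ℝ) : cc c 0 = 1 := by
  unfold cc; split <;> simp

lemma sc_zero (c : ℝ) : sc c 0 = 0 := by
  unfold sc; split
  · simp
  · split <;> simp

lemma hasDerivAt_cc (c x : ℝ) : HasDerivAt (fun y => cc c y) (c * sc c x) x := by
  rcases lt_trichotomy c 0 with hc | hc | hc
  · have h0 : ¬ (0 ≤ c) := not_le.2 hc
    have hk : (0:ℝ) < Real.sqrt (-c) := Real.sqrt_pos.2 (by linarith)
    have hkk : Real.sqrt (-c) * Real.sqrt (-c) = -c := Real.mul_self_sqrt (by linarith)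
    simp only [cc, sc, h0, if_false, if_neg (not_lt.2 hc.le), if_pos hc]
    have hD : HasDerivAt (fun y => Real.cos (Real.sqrt (-c) * y))
        (-Real.sin (Real.sqrt (-c) * x) * Real.sqrt (-c)) x := by
      have h1 : HasDerivAt (fun y : ℝ => Real.sqrt (-c) * y) (Real.sqrt (-c)) x := by
        simpa using (hasDerivAt_id x).const_mul (Real.sqrt (-c))
      simpa [Function.comp_def] using (Real.hasDerivAt_cos (Real.sqrt (-c) * x)).comp x h1
    convert hD using 1
    rw [← mul_div_assoc, div_eq_iff hk.ne', mul_assoc, hkk]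
    ring
  · subst hc
    simp only [cc, sc, le_refl, if_pos, Real.sqrt_zero, zero_mul, Real.cosh_zero]
    simpa using (hasDerivAt_const x (1:ℝ))
  · have h0 : (0:ℝ) ≤ c := hc.le
    have hk : (0:ℝ) < Real.sqrt c := Real.sqrt_pos.2 hc
    have hkk : Real.sqrt c * Real.sqrt c = c := Real.mul_self_sqrt h0
    simp only [cc, sc, if_pos h0, if_pos hc]
    have hD : HasDerivAt (fun y => Real.cosh (Real.sqrt c * y))
        (Real.sinh (Real.sqrt c * x) * Real.sqrt c) x := by
      have h1 : HasDerivAt (fun y : ℝ => Real.sqrt c * y) (Real.sqrt c) x := by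
        simpa using (hasDerivAt_id x).const_mul (Real.sqrt c)
      simpa [Function.comp_def] using (Real.hasDerivAt_cosh (Real.sqrt c * x)).comp x h1
    convert hD using 1
    rw [← mul_div_assoc, div_eq_iff hk.ne', mul_assoc, hkk]
    ring

lemma hasDerivAt_sc (c x : ℝ) : HasDerivAt (fun y => sc c y) (cc c x) x := by
  rcases lt_trichotomy c 0 with hc | hc | hc
  · have h0 : ¬ (0 ≤ c) := not_le.2 hc
    have hk : (0:ℝ) < Real.sqrt (-c) := Real.sqrt_pos.2 (by linarith)
    simp only [cc, sc, h0, if_false, if_neg (not_lt.2 hc.le), if_pos hc]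
    have hD : HasDerivAt (fun y => Real.sin (Real.sqrt (-c) * y) / Real.sqrt (-c))
        ((Real.cos (Real.sqrt (-c) * x) * Real.sqrt (-c)) / Real.sqrt (-c)) x := by
      have h1 : HasDerivAt (fun y : ℝ => Real.sqrt (-c) * y) (Real.sqrt (-c)) x := by
        simpa using (hasDerivAt_id x).const_mul (Real.sqrt (-c))
      exact ((Real.hasDerivAt_sin (Real.sqrt (-c) * x)).comp x h1).div_const _
    convert hD using 1
    field_simp
  · subst hc
    simp only [cc, sc, le_refl, if_pos, Real.sqrt_zero, zero_mul, Real.cosh_zero,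
      lt_irrefl, if_false]
    simpa using (hasDerivAt_id' x)
  · have h0 : (0:ℝ) ≤ c := hc.le
    have hk : (0:ℝ) < Real.sqrt c := Real.sqrt_pos.2 hc
    simp only [cc, sc, if_pos h0, if_pos hc]
    have hD : HasDerivAt (fun y => Real.sinh (Real.sqrt c * y) / Real.sqrt c)
        ((Real.cosh (Real.sqrt c * x) * Real.sqrt c) / Real.sqrt c) x := by
      have h1 : HasDerivAt (fun y : ℝ => Real.sqrt c * y) (Real.sqrt c) x := by
        simpa using (hasDerivAt_id x).const_mul (Real.sqrt c)
      exact ((Real.hasDerivAt_sinh (Real.sqrt c * x)).comp x h1).div_const _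
    convert hD using 1
    field_simp

lemma continuous_cc (c : ℝ) : Continuous (fun y => cc c y) := by
  have : ∀ x, HasDerivAt (fun y => cc c y) (c * sc c x) x := hasDerivAt_cc c
  exact continuous_iff_continuousAt.2 fun x => (this x).continuousAt

lemma continuous_sc (c : ℝ) : Continuous (fun y => sc c y) := by
  exact continuous_iff_continuousAt.2 fun x => (hasDerivAt_sc c x).continuousAt


noncomputable def stU (c t0 u0 v0 x : ℝ) : ℝ := cc c (x - t0) * u0 + c * sc c (x - t0) * v0
noncomputable def stV (c t0 u0 v0 x : ℝ) : ℝ := sc c (x - t0) * u0 + cc c (x - t0) * v0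

lemma stU_t0 (c t0 u0 v0 : ℝ) : stU c t0 u0 v0 t0 = u0 := by
  simp [stU, cc_zero, sc_zero]

lemma stV_t0 (c t0 u0 v0 : ℝ) : stV c t0 u0 v0 t0 = v0 := by
  simp [stV, cc_zero, sc_zero]

lemma continuous_stU (c t0 u0 v0 : ℝ) : Continuous (stU c t0 u0 v0) := by
  unfold stU
  exact (((continuous_cc c).comp (continuous_id.sub continuous_const)).mul continuous_const).add
    ((continuous_const.mul ((continuous_sc c).comp (continuous_id.sub continuous_const))).mul
      continuous_const)

lemma continuous_stV (c t0 u0 v0 : ℝ) : Continuous (stV c t0 u0 v0) := by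
  unfold stV
  exact (((continuous_sc c).comp (continuous_id.sub continuous_const)).mul continuous_const).add
    (((continuous_cc c).comp (continuous_id.sub continuous_const)).mul continuous_const)

lemma hasDerivAt_stU (c t0 u0 v0 x : ℝ) :
    HasDerivAt (stU c t0 u0 v0) (c * stV c t0 u0 v0 x) x := by
  have h1 : HasDerivAt (fun y : ℝ => y - t0) 1 x := (hasDerivAt_id x).sub_const t0
  have hc : HasDerivAt (fun y => cc c (y - t0)) (c * sc c (x - t0)) x := by
    simpa [Function.comp_def] using (hasDerivAt_cc c (x - t0)).comp x h1
  have hs : HasDerivAt (fun y => sc c (y - t0)) (cc c (x - t0)) x := by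
    simpa [Function.comp_def] using (hasDerivAt_sc c (x - t0)).comp x h1
  have := ((hc.mul_const u0).add (((hs.const_mul c)).mul_const v0))
  refine this.congr_deriv ?_
  unfold stV; ring

lemma hasDerivAt_stV (c t0 u0 v0 x : ℝ) :
    HasDerivAt (stV c t0 u0 v0) (stU c t0 u0 v0 x) x := by
  have h1 : HasDerivAt (fun y : ℝ => y - t0) 1 x := (hasDerivAt_id x).sub_const t0
  have hc : HasDerivAt (fun y => cc c (y - t0)) (c * sc c (x - t0)) x := by
    simpa [Function.comp_def] using (hasDerivAt_cc c (x - t0)).comp x h1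
  have hs : HasDerivAt (fun y => sc c (y - t0)) (cc c (x - t0)) x := by
    simpa [Function.comp_def] using (hasDerivAt_sc c (x - t0)).comp x h1
  have := ((hs.mul_const u0).add (hc.mul_const v0))
  exact this

lemma integral_stU (c t0 u0 v0 s x : ℝ) :
    ∫ t in s..x, stU c t0 u0 v0 t = stV c t0 u0 v0 x - stV c t0 u0 v0 s :=
  integral_eq_sub_of_hasDerivAt (fun t _ => hasDerivAt_stV c t0 u0 v0 t)
    ((continuous_stU c t0 u0 v0).intervalIntegrable s x)

lemma integral_stV (c t0 u0 v0 s x : ℝ) :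
    ∫ t in s..x, c * stV c t0 u0 v0 t = stU c t0 u0 v0 x - stU c t0 u0 v0 s := by
  exact integral_eq_sub_of_hasDerivAt (fun t _ => hasDerivAt_stU c t0 u0 v0 t)
    ((continuous_const.mul (continuous_stV c t0 u0 v0)).intervalIntegrable s x)

/-- the explicit solution, first component -/
noncomputable def uSol (δ lam e0 e1 x : ℝ) : ℝ :=
  if x ≤ δ then stU (1 - lam) 0 e0 e1 x
  else stU (-1 - lam) δ (stU (1 - lam) 0 e0 e1 δ) (stV (1 - lam) 0 e0 e1 δ) x

/-- the explicit solution, second component -/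
noncomputable def vSol (δ lam e0 e1 x : ℝ) : ℝ :=
  if x ≤ δ then stV (1 - lam) 0 e0 e1 x
  else stV (-1 - lam) δ (stU (1 - lam) 0 e0 e1 δ) (stV (1 - lam) 0 e0 e1 δ) x

lemma continuous_uSol (δ lam e0 e1 : ℝ) : Continuous (uSol δ lam e0 e1) := by
  apply Continuous.if_le (continuous_stU _ _ _ _) (continuous_stU _ _ _ _) continuous_id
    continuous_const
  intro x hx
  subst hx
  simp [stU_t0]

lemma continuous_vSol (δ lam e0 e1 : ℝ) : Continuous (vSol δ lam e0 e1) := by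
  apply Continuous.if_le (continuous_stV _ _ _ _) (continuous_stV _ _ _ _) continuous_id
    continuous_const
  intro x hx
  subst hx
  simp [stV_t0]

lemma uSol_zero (δ lam e0 e1 : ℝ) (hδ : 0 ≤ δ) : uSol δ lam e0 e1 0 = e0 := by
  simp only [uSol, if_pos hδ]
  simpa using stU_t0 (1 - lam) 0 e0 e1

lemma vSol_zero (δ lam e0 e1 : ℝ) (hδ : 0 ≤ δ) : vSol δ lam e0 e1 0 = e1 := by
  simp only [vSol, if_pos hδ]
  simpa using stV_t0 (1 - lam) 0 e0 e1

lemma ae_ne (b : ℝ) : ∀ᵐ t : ℝ, t ≠ b := by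
  have h : {t : ℝ | ¬ t ≠ b} = {b} := by ext t; simp
  rw [MeasureTheory.ae_iff, h]
  exact Real.volume_singleton

lemma measurable_Wsq (δ : ℝ) : Measurable (Wsq δ) := by
  unfold Wsq
  exact Measurable.ite measurableSet_Iio measurable_const measurable_const

lemma Wsq_sub_bound (δ lam t : ℝ) : |Wsq δ t - lam| ≤ 1 + |lam| := by
  have h1 : |Wsq δ t| ≤ 1 := by unfold Wsq; split <;> simp
  have h2 : |Wsq δ t - lam| ≤ |Wsq δ t| + |lam| := by
    simpa [sub_eq_add_neg] using abs_add_le (Wsq δ t) (-lam)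
  linarith


lemma aeR {y z : ℝ} {f g : ℝ → ℝ} (h : ∀ᵐ t : ℝ, t ∈ Set.uIoc y z → f t = g t) :
    f =ᵐ[volume.restrict (Set.uIoc y z)] g :=
  (ae_restrict_iff' measurableSet_uIoc).2 h

/-- Volterra identity for `uSol`, left piece. -/
lemma uSol_eq_left (δ lam e0 e1 : ℝ) (x : ℝ) (hx : 0 ≤ x) (hxd : x ≤ δ) :
    uSol δ lam e0 e1 x = e0 + ∫ t in (0:ℝ)..x, (Wsq δ t - lam) * vSol δ lam e0 e1 t := by
  have hcong : ∫ t in (0:ℝ)..x, (Wsq δ t - lam) * vSol δ lam e0 e1 t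
      = ∫ t in (0:ℝ)..x, (1 - lam) * stV (1 - lam) 0 e0 e1 t := by
    apply intervalIntegral.integral_congr_ae
    filter_upwards [ae_ne δ] with t ht hmem
    rw [uIoc_of_le hx] at hmem
    have ht1 : t < δ := lt_of_le_of_ne (hmem.2.trans hxd) ht
    rw [Wsq, if_pos ht1, vSol, if_pos ht1.le]
  rw [hcong, integral_stV, uSol, if_pos hxd]
  have h0 : stU (1 - lam) 0 e0 e1 0 = e0 := by simpa using stU_t0 (1 - lam) 0 e0 e1
  rw [h0]; ring

/-- Volterra identity for `vSol`, left piece. -/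
lemma vSol_eq_left (δ lam e0 e1 : ℝ) (x : ℝ) (hx : 0 ≤ x) (hxd : x ≤ δ) :
    vSol δ lam e0 e1 x = e1 + ∫ t in (0:ℝ)..x, uSol δ lam e0 e1 t := by
  have hcong : ∫ t in (0:ℝ)..x, uSol δ lam e0 e1 t
      = ∫ t in (0:ℝ)..x, stU (1 - lam) 0 e0 e1 t := by
    apply integral_congr
    intro t hmem
    rw [uIcc_of_le hx] at hmem
    simp only [uSol]
    rw [if_pos (hmem.2.trans hxd)]
  rw [hcong, integral_stU, vSol, if_pos hxd]
  have h0 : stV (1 - lam) 0 e0 e1 0 = e1 := by simpa using stV_t0 (1 - lam) 0 e0 e1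
  rw [h0]; ring

lemma int_left (δ lam e0 e1 : ℝ) (hδ : 0 ≤ δ) :
    IntervalIntegrable (fun t => (Wsq δ t - lam) * vSol δ lam e0 e1 t) volume 0 δ := by
  apply IntervalIntegrable.congr_ae
    (f := fun t => (1 - lam) * stV (1 - lam) 0 e0 e1 t)
  · exact (continuous_const.mul (continuous_stV _ _ _ _)).intervalIntegrable _ _
  · apply aeR
    filter_upwards [ae_ne δ] with t ht hmem
    rw [uIoc_of_le hδ] at hmem
    have ht1 : t < δ := lt_of_le_of_ne hmem.2 ht
    simp only [Wsq, vSol]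
    rw [if_pos ht1, if_pos ht1.le]

lemma int_right (δ lam e0 e1 x : ℝ) (hxd : δ ≤ x) :
    IntervalIntegrable (fun t => (Wsq δ t - lam) * vSol δ lam e0 e1 t) volume δ x := by
  apply IntervalIntegrable.congr_ae
    (f := fun t => (-1 - lam) * stV (-1 - lam) δ (stU (1 - lam) 0 e0 e1 δ)
      (stV (1 - lam) 0 e0 e1 δ) t)
  · exact (continuous_const.mul (continuous_stV _ _ _ _)).intervalIntegrable _ _
  · apply aeR
    apply Filter.Eventually.of_forall
    intro t hmem
    rw [uIoc_of_le hxd] at hmem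
    have ht1 : ¬ (t < δ) := not_lt.2 hmem.1.le
    have ht2 : ¬ (t ≤ δ) := not_le.2 hmem.1
    simp only [Wsq, vSol]
    rw [if_neg ht1, if_neg ht2]

/-- Volterra identity for `uSol`. -/
lemma uSol_eq (δ lam e0 e1 : ℝ) (hδ : 0 < δ) (x : ℝ) (hx : 0 ≤ x) :
    uSol δ lam e0 e1 x = e0 + ∫ t in (0:ℝ)..x, (Wsq δ t - lam) * vSol δ lam e0 e1 t := by
  rcases le_or_gt x δ with hxd | hxd
  · exact uSol_eq_left δ lam e0 e1 x hx hxd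
  · rw [← integral_add_adjacent_intervals (int_left δ lam e0 e1 hδ.le)
      (int_right δ lam e0 e1 x hxd.le)]
    have hp1 : ∫ t in (0:ℝ)..δ, (Wsq δ t - lam) * vSol δ lam e0 e1 t
        = uSol δ lam e0 e1 δ - e0 := by
      have := uSol_eq_left δ lam e0 e1 δ hδ.le le_rfl
      linarith
    have hp2 : ∫ t in δ..x, (Wsq δ t - lam) * vSol δ lam e0 e1 t
        = uSol δ lam e0 e1 x - uSol δ lam e0 e1 δ := by
      have hcong : ∫ t in δ..x, (Wsq δ t - lam) * vSol δ lam e0 e1 t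
          = ∫ t in δ..x, (-1 - lam) * stV (-1 - lam) δ (stU (1 - lam) 0 e0 e1 δ)
            (stV (1 - lam) 0 e0 e1 δ) t := by
        apply integral_congr
        intro t hmem
        rw [uIcc_of_le hxd.le] at hmem
        simp only [Wsq, vSol]
        rcases eq_or_lt_of_le hmem.1 with h | h
        · rw [if_neg (not_lt.2 hmem.1), ← h, if_pos le_rfl, stV_t0]
        · rw [if_neg (not_lt.2 hmem.1), if_neg (not_le.2 h)]
      rw [hcong, integral_stV]
      rw [stU_t0]
      have hx1 : uSol δ lam e0 e1 x = stU (-1 - lam) δ (stU (1 - lam) 0 e0 e1 δ)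
          (stV (1 - lam) 0 e0 e1 δ) x := by rw [uSol, if_neg (not_le.2 hxd)]
      have hx2 : uSol δ lam e0 e1 δ = stU (1 - lam) 0 e0 e1 δ := by
        rw [uSol, if_pos le_rfl]
      rw [hx1, hx2]
    rw [hp1, hp2]; ring

/-- Volterra identity for `vSol`. -/
lemma vSol_eq (δ lam e0 e1 : ℝ) (hδ : 0 < δ) (x : ℝ) (hx : 0 ≤ x) :
    vSol δ lam e0 e1 x = e1 + ∫ t in (0:ℝ)..x, uSol δ lam e0 e1 t := by
  rcases le_or_gt x δ with hxd | hxd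
  · exact vSol_eq_left δ lam e0 e1 x hx hxd
  · have i1 : IntervalIntegrable (uSol δ lam e0 e1) volume 0 δ :=
      (continuous_uSol _ _ _ _).intervalIntegrable _ _
    have i2 : IntervalIntegrable (uSol δ lam e0 e1) volume δ x :=
      (continuous_uSol _ _ _ _).intervalIntegrable _ _
    rw [← integral_add_adjacent_intervals i1 i2]
    have hp1 : ∫ t in (0:ℝ)..δ, uSol δ lam e0 e1 t = vSol δ lam e0 e1 δ - e1 := by
      have := vSol_eq_left δ lam e0 e1 δ hδ.le le_rfl
      linarith
    have hp2 : ∫ t in δ..x, uSol δ lam e0 e1 t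
        = vSol δ lam e0 e1 x - vSol δ lam e0 e1 δ := by
      have hcong : ∫ t in δ..x, uSol δ lam e0 e1 t
          = ∫ t in δ..x, stU (-1 - lam) δ (stU (1 - lam) 0 e0 e1 δ)
            (stV (1 - lam) 0 e0 e1 δ) t := by
        apply integral_congr
        intro t hmem
        rw [uIcc_of_le hxd.le] at hmem
        simp only [uSol]
        rcases eq_or_lt_of_le hmem.1 with h | h
        · rw [← h, if_pos le_rfl, stU_t0]
        · rw [if_neg (not_le.2 h)]
      rw [hcong, integral_stU, stV_t0]
      have hx1 : vSol δ lam e0 e1 x = stV (-1 - lam) δ (stU (1 - lam) 0 e0 e1 δ)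
          (stV (1 - lam) 0 e0 e1 δ) x := by rw [vSol, if_neg (not_le.2 hxd)]
      have hx2 : vSol δ lam e0 e1 δ = stV (1 - lam) 0 e0 e1 δ := by
        rw [vSol, if_pos le_rfl]
      rw [hx1, hx2]
    rw [hp1, hp2]; ring


/-- bounded a.e.-measurable functions on an interval are interval integrable -/
lemma intervalIntegrable_of_bdd {f : ℝ → ℝ} {y z C : ℝ}
    (hm : AEStronglyMeasurable f (volume.restrict (Set.uIoc y z)))
    (hb : ∀ t ∈ Set.uIoc y z, |f t| ≤ C) :
    IntervalIntegrable f volume y z := by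
  rw [intervalIntegrable_iff]
  have hC : IntegrableOn (fun _ : ℝ => C) (Set.uIoc y z) volume := by
    exact integrableOn_const (by rw [Set.uIoc]; exact measure_Ioc_lt_top.ne)
  apply Integrable.mono' hC hm
  apply (ae_restrict_iff' measurableSet_uIoc).2
  exact Filter.Eventually.of_forall (fun t ht => by simpa [Real.norm_eq_abs] using hb t ht)

/-- Grönwall: a continuous nonnegative function dominated by `K` times its own
integral vanishes. -/
lemma gronwall_zero {L K : ℝ} (hK : 0 ≤ K) {h : ℝ → ℝ} (hL : 0 ≤ L)
    (hc : ContinuousOn h (Icc 0 L)) (hnn : ∀ t ∈ Icc 0 L, 0 ≤ h t)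
    (hb : ∀ x ∈ Icc 0 L, h x ≤ K * ∫ t in (0:ℝ)..x, h t) :
    ∀ x ∈ Icc 0 L, h x = 0 := by
  -- continuous extension of h to ℝ
  set H : ℝ → ℝ := fun t => h (max 0 (min t L)) with hH
  have hclamp : ∀ t : ℝ, max 0 (min t L) ∈ Icc 0 L := by
    intro t
    constructor
    · exact le_max_left _ _
    · exact max_le hL (min_le_right _ _)
  have hHcont : Continuous H := by
    apply hc.comp_continuous
    · exact continuous_const.max (continuous_id.min continuous_const)
    · exact hclamp
  have hHnn : ∀ t, 0 ≤ H t := fun t => hnn _ (hclamp t)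
  have hHeq : ∀ t ∈ Icc 0 L, H t = h t := by
    intro t ht
    simp only [hH, min_eq_left ht.2, max_eq_right ht.1]
  set Φ : ℝ → ℝ := fun x => ∫ t in (0:ℝ)..x, H t with hΦ
  have hΦd : ∀ x : ℝ, HasDerivAt Φ (H x) x := fun x =>
    (hHcont.integral_hasStrictDerivAt 0 x).hasDerivAt
  have hΦeq : ∀ x ∈ Icc 0 L, Φ x = ∫ t in (0:ℝ)..x, h t := by
    intro x hx
    apply intervalIntegral.integral_congr
    intro t ht
    rw [uIcc_of_le hx.1] at ht
    exact hHeq t ⟨ht.1, ht.2.trans hx.2⟩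
  have hΦnn : ∀ x ∈ Icc 0 L, 0 ≤ Φ x := by
    intro x hx
    apply intervalIntegral.integral_nonneg hx.1
    intro t _
    exact hHnn t
  have key : ∀ x ∈ Icc 0 L, ‖Φ x‖ ≤ gronwallBound 0 K 0 (x - 0) := by
    apply norm_le_gronwallBound_of_norm_deriv_right_le
      (f' := H)
    · exact fun x _ => ((hΦd x).continuousAt).continuousWithinAt
    · exact fun x _ => (hΦd x).hasDerivWithinAt
    · simp [hΦ]
    · intro x hx
      have hx' : x ∈ Icc 0 L := ⟨hx.1, hx.2.le⟩
      rw [Real.norm_eq_abs, Real.norm_eq_abs, abs_of_nonneg (hHnn x),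
        abs_of_nonneg (hΦnn x hx')]
      rw [hHeq x hx', hΦeq x hx']
      linarith [hb x hx']
  intro x hx
  have h1 : Φ x = 0 := by
    have := key x hx
    rw [gronwallBound_ε0] at this
    simp at this
    have h2 := hΦnn x hx
    have : |Φ x| ≤ 0 := by simpa [Real.norm_eq_abs] using this
    cases abs_le.1 this
    linarith [abs_nonneg (Φ x)]
  have h3 := hb x hx
  rw [← hΦeq x hx] at h3
  rw [h1] at h3
  have h4 := hnn x hx
  nlinarith
lemma uv_unique (δ lam e0 e1 : ℝ) (hδ : 0 < δ) (u v : ℝ → ℝ)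
    (hu : ∀ x ∈ Icc (0:ℝ) (2*δ), u x = e0 + ∫ t in (0:ℝ)..x, (Wsq δ t - lam) * v t)
    (hv : ∀ x ∈ Icc (0:ℝ) (2*δ), v x = e1 + ∫ t in (0:ℝ)..x, u t) :
    ∀ x ∈ Icc (0:ℝ) (2*δ), u x = uSol δ lam e0 e1 x ∧ v x = vSol δ lam e0 e1 x := by
  set L := 2*δ with hLdef
  have hL : 0 < L := by positivity
  set US := uSol δ lam e0 e1 with hUS
  set VS := vSol δ lam e0 e1 with hVS
  -- bounds for US, VS on [0, L]
  obtain ⟨CU, hCU⟩ := (isCompact_Icc (a := (0:ℝ)) (b := L)).exists_bound_of_continuousOn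
    (continuous_uSol δ lam e0 e1).continuousOn
  obtain ⟨CV, hCV⟩ := (isCompact_Icc (a := (0:ℝ)) (b := L)).exists_bound_of_continuousOn
    (continuous_vSol δ lam e0 e1).continuousOn
  -- the good set
  set S : Set ℝ := {y | y ∈ Icc 0 L ∧ ∀ t ∈ Icc 0 y, u t = US t ∧ v t = VS t} with hSdef
  have h0S : (0:ℝ) ∈ S := by
    refine ⟨⟨le_rfl, hL.le⟩, ?_⟩
    intro t ht
    have ht0 : t = 0 := le_antisymm ht.2 ht.1
    subst ht0
    constructor
    · rw [hu 0 ⟨le_rfl, hL.le⟩, intervalIntegral.integral_same, hUS, uSol_zero _ _ _ _ hδ.le]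
      ring
    · rw [hv 0 ⟨le_rfl, hL.le⟩, intervalIntegral.integral_same, hVS, vSol_zero _ _ _ _ hδ.le]
      ring
  have hbdd : BddAbove S := ⟨L, fun y hy => hy.1.2⟩
  have hne : S.Nonempty := ⟨0, h0S⟩
  set M := sSup S with hMdef
  have hM0 : 0 ≤ M := le_csSup hbdd h0S
  have hML : M ≤ L := csSup_le hne (fun y hy => hy.1.2)
  have hlt : ∀ t, 0 ≤ t → t < M → (u t = US t ∧ v t = VS t) := by
    intro t ht0 htM
    obtain ⟨y, hyS, hty⟩ := exists_lt_of_lt_csSup hne htM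
    exact hyS.2 t ⟨ht0, hty.le⟩
  -- the claim: equality holds on [0, M]
  have keyA : ∀ t ∈ Icc (0:ℝ) M, u t = US t ∧ v t = VS t := by
    intro t ⟨ht0, htM⟩
    rcases lt_or_eq_of_le htM with h | h
    · exact hlt t ht0 h
    · have htL : t ≤ L := le_trans (le_of_eq h) hML
      constructor
      · rw [hu t ⟨ht0, htL⟩, hUS, uSol_eq _ _ _ _ hδ t ht0]
        congr 1
        apply intervalIntegral.integral_congr_ae
        filter_upwards [ae_ne t] with s hs hmem
        rw [uIoc_of_le ht0] at hmem
        have hsM : s < M := lt_of_lt_of_le (lt_of_le_of_ne hmem.2 hs) (le_of_eq h)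
        rw [(hlt s hmem.1.le hsM).2]
      · rw [hv t ⟨ht0, htL⟩, hVS, vSol_eq _ _ _ _ hδ t ht0]
        congr 1
        apply intervalIntegral.integral_congr_ae
        filter_upwards [ae_ne t] with s hs hmem
        rw [uIoc_of_le ht0] at hmem
        have hsM : s < M := lt_of_lt_of_le (lt_of_le_of_ne hmem.2 hs) (le_of_eq h)
        rw [(hlt s hmem.1.le hsM).1]
  -- integrability of the comparison integrand
  have intWVS : ∀ x y : ℝ, IntervalIntegrable (fun t => (Wsq δ t - lam) * VS t) volume x y := by
    intro x y
    obtain ⟨C, hC⟩ := (isCompact_uIcc (a := x) (b := y)).exists_bound_of_continuousOn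
      (continuous_vSol δ lam e0 e1).continuousOn
    apply intervalIntegrable_of_bdd (C := (1+|lam|)*C)
    · exact (((measurable_Wsq δ).sub measurable_const).mul
        (continuous_vSol δ lam e0 e1).measurable).aestronglyMeasurable.restrict
    · intro t ht
      have h1 := Wsq_sub_bound δ lam t
      have h2 : |VS t| ≤ C := by
        simpa [Real.norm_eq_abs] using hC t (uIoc_subset_uIcc ht)
      have h3 : (0:ℝ) ≤ C := le_trans (abs_nonneg _) h2
      calc |(Wsq δ t - lam) * VS t| = |Wsq δ t - lam| * |VS t| := abs_mul _ _
      _ ≤ (1+|lam|)*C := mul_le_mul h1 h2 (abs_nonneg _) (by positivity)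
  -- the central contradiction step
  have caseMain : ∀ y, M < y → y ≤ L →
      IntervalIntegrable (fun t => (Wsq δ t - lam) * v t) volume 0 y →
      IntervalIntegrable u volume 0 y → False := by
    intro y hMy hyL hPu hPv
    have hy0 : (0:ℝ) ≤ y := hM0.trans hMy.le
    -- continuity of u and v on [0, y]
    have hcu : ContinuousOn u (Icc 0 y) := by
      have hk : ContinuousOn (fun x => e0 + ∫ t in (0:ℝ)..x, (Wsq δ t - lam) * v t)
          (Icc 0 y) := by
        have := intervalIntegral.continuousOn_primitive_interval'
          (f := fun t => (Wsq δ t - lam) * v t) (μ := volume) (b₁ := 0) (b₂ := y) (a := 0)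
          hPu (by rw [uIcc_of_le hy0]; exact ⟨le_rfl, hy0⟩)
        rw [uIcc_of_le hy0] at this
        exact continuousOn_const.add this
      apply hk.congr
      intro x hx
      exact hu x ⟨hx.1, hx.2.trans hyL⟩
    have hcv : ContinuousOn v (Icc 0 y) := by
      have hk : ContinuousOn (fun x => e1 + ∫ t in (0:ℝ)..x, u t) (Icc 0 y) := by
        have := intervalIntegral.continuousOn_primitive_interval'
          (f := u) (μ := volume) (b₁ := 0) (b₂ := y) (a := 0)
          hPv (by rw [uIcc_of_le hy0]; exact ⟨le_rfl, hy0⟩)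
        rw [uIcc_of_le hy0] at this
        exact continuousOn_const.add this
      apply hk.congr
      intro x hx
      exact hv x ⟨hx.1, hx.2.trans hyL⟩
    -- the Gronwall function
    set g : ℝ → ℝ := fun t => |u t - US t| + |v t - VS t| with hgdef
    have hgc : ContinuousOn g (Icc 0 y) :=
      ((hcu.sub (continuous_uSol δ lam e0 e1).continuousOn).abs).add
        ((hcv.sub (continuous_vSol δ lam e0 e1).continuousOn).abs)
    have hgnn : ∀ t ∈ Icc (0:ℝ) y, 0 ≤ g t := fun t _ => by positivity
    have hgint : ∀ x, x ∈ Icc (0:ℝ) y → IntervalIntegrable g volume 0 x := by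
      intro x hx
      apply ContinuousOn.intervalIntegrable
      apply hgc.mono
      rw [uIcc_of_le hx.1]
      exact Icc_subset_Icc le_rfl hx.2
    have hbnd : ∀ x ∈ Icc (0:ℝ) y, g x ≤ ((1+|lam|)+1) * ∫ t in (0:ℝ)..x, g t := by
      intro x hx
      have hx0 := hx.1
      have hxy := hx.2
      have hxL : x ≤ L := hxy.trans hyL
      have hPux : IntervalIntegrable (fun t => (Wsq δ t - lam) * v t) volume 0 x :=
        hPu.mono_set (by rw [uIcc_of_le hx0, uIcc_of_le hy0]; exact Icc_subset_Icc le_rfl hxy)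
      have hPvx : IntervalIntegrable u volume 0 x :=
        hPv.mono_set (by rw [uIcc_of_le hx0, uIcc_of_le hy0]; exact Icc_subset_Icc le_rfl hxy)
      have hud : u x - US x = ∫ t in (0:ℝ)..x,
          ((Wsq δ t - lam) * v t - (Wsq δ t - lam) * VS t) := by
        rw [intervalIntegral.integral_sub hPux (intWVS 0 x),
          hu x ⟨hx0, hxL⟩, hUS, uSol_eq _ _ _ _ hδ x hx0]
        ring
      have hvd : v x - VS x = ∫ t in (0:ℝ)..x, (u t - US t) := by
        rw [intervalIntegral.integral_sub hPvx
            ((continuous_uSol δ lam e0 e1).intervalIntegrable 0 x),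
          hv x ⟨hx0, hxL⟩, hVS, vSol_eq _ _ _ _ hδ x hx0]
        ring
      have hu1 : |u x - US x| ≤ (1+|lam|) * ∫ t in (0:ℝ)..x, g t := by
        rw [hud, ← intervalIntegral.integral_const_mul]
        calc |∫ t in (0:ℝ)..x, ((Wsq δ t - lam) * v t - (Wsq δ t - lam) * VS t)|
            ≤ ∫ t in (0:ℝ)..x, |(Wsq δ t - lam) * v t - (Wsq δ t - lam) * VS t| := by
              simpa [Real.norm_eq_abs] using
                intervalIntegral.norm_integral_le_integral_norm
                  (f := fun t => ((Wsq δ t - lam) * v t - (Wsq δ t - lam) * VS t)) hx0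
        _ ≤ ∫ t in (0:ℝ)..x, (1+|lam|) * g t := by
              apply intervalIntegral.integral_mono_on hx0
                ((hPux.sub (intWVS 0 x)).abs)
                (((hgint x hx).const_mul _))
              intro t _
              have h1 : (Wsq δ t - lam) * v t - (Wsq δ t - lam) * VS t
                  = (Wsq δ t - lam) * (v t - VS t) := by ring
              rw [h1, abs_mul]
              have h2 := Wsq_sub_bound δ lam t
              have h3 : |v t - VS t| ≤ g t := by
                rw [hgdef]
                have := abs_nonneg (u t - US t)
                simp only []
                linarith
              exact mul_le_mul h2 h3 (abs_nonneg _) (by positivity)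
      have hv1 : |v x - VS x| ≤ ∫ t in (0:ℝ)..x, g t := by
        rw [hvd]
        calc |∫ t in (0:ℝ)..x, (u t - US t)|
            ≤ ∫ t in (0:ℝ)..x, |u t - US t| := by
              simpa [Real.norm_eq_abs] using
                intervalIntegral.norm_integral_le_integral_norm
                  (f := fun t => (u t - US t)) hx0
        _ ≤ ∫ t in (0:ℝ)..x, g t := by
              apply intervalIntegral.integral_mono_on hx0
                ((hPvx.sub ((continuous_uSol δ lam e0 e1).intervalIntegrable 0 x)).abs)
                (hgint x hx)
              intro t _
              rw [hgdef]
              have := abs_nonneg (v t - VS t)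
              simp only []
              linarith
      have hgx : g x = |u x - US x| + |v x - VS x| := rfl
      rw [hgx]
      have hgpos : (0:ℝ) ≤ ∫ t in (0:ℝ)..x, g t := by
        apply intervalIntegral.integral_nonneg (μ := volume) hx0
        intro t _
        positivity
      nlinarith [hu1, hv1, hgpos]
    have hzero := gronwall_zero (K := (1+|lam|)+1) (by positivity) hy0 hgc hgnn hbnd
    have hyS : y ∈ S := by
      refine ⟨⟨hy0, hyL⟩, ?_⟩
      intro t ht
      have h0 := hzero t ht
      have hgt : |u t - US t| + |v t - VS t| = 0 := h0
      have h1 : |u t - US t| = 0 := by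
        nlinarith [abs_nonneg (u t - US t), abs_nonneg (v t - VS t)]
      have h2 : |v t - VS t| = 0 := by
        nlinarith [abs_nonneg (u t - US t), abs_nonneg (v t - VS t)]
      constructor
      · have := abs_eq_zero.1 h1; linarith
      · have := abs_eq_zero.1 h2; linarith
    exact absurd (le_csSup hbdd hyS) (not_le.2 hMy)
  -- now show M = L
  have hMeqL : M = L := by
    by_contra hne'
    have hMLlt : M < L := lt_of_le_of_ne hML hne'
    by_cases hEu : ∃ y, M < y ∧ y ≤ L ∧
        IntervalIntegrable (fun t => (Wsq δ t - lam) * v t) volume 0 y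
    · by_cases hEv : ∃ y, M < y ∧ y ≤ L ∧ IntervalIntegrable u volume 0 y
      · obtain ⟨y1, hy1M, hy1L, hy1P⟩ := hEu
        obtain ⟨y2, hy2M, hy2L, hy2P⟩ := hEv
        have h01 : (0:ℝ) ≤ y1 := hM0.trans hy1M.le
        have h02 : (0:ℝ) ≤ y2 := hM0.trans hy2M.le
        apply caseMain (min y1 y2) (lt_min hy1M hy2M) ((min_le_left _ _).trans hy1L)
        · exact hy1P.mono_set (by
            rw [uIcc_of_le (le_min h01 h02), uIcc_of_le h01]
            exact Icc_subset_Icc le_rfl (min_le_left _ _))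
        · exact hy2P.mono_set (by
            rw [uIcc_of_le (le_min h01 h02), uIcc_of_le h02]
            exact Icc_subset_Icc le_rfl (min_le_right _ _))
      · -- v is constant e1 beyond M; then everything is integrable, contradiction
        push_neg at hEv
        have hvconst : ∀ y, M < y → y ≤ L → v y = e1 := by
          intro y h1 h2
          rw [hv y ⟨hM0.trans h1.le, h2⟩, intervalIntegral.integral_undef (hEv y h1 h2)]
          ring
        set gv : ℝ → ℝ := fun t => if t ≤ M then VS t else e1 with hgvdef
        have hveq : ∀ t ∈ Icc (0:ℝ) L, v t = gv t := by
          intro t ht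
          rw [hgvdef]
          simp only []
          split
          · next hc => exact (keyA t ⟨ht.1, hc⟩).2
          · next hc => exact hvconst t (not_le.1 hc) ht.2
        have hCV0 : (0:ℝ) ≤ CV := le_trans (norm_nonneg _) (hCV 0 ⟨le_rfl, hL.le⟩)
        have hgvm : Measurable gv := by
          rw [hgvdef]
          exact Measurable.ite measurableSet_Iic
            (continuous_vSol δ lam e0 e1).measurable measurable_const
        have hPuAll : IntervalIntegrable (fun t => (Wsq δ t - lam) * v t) volume 0 L := by
          have base : IntervalIntegrable (fun t => (Wsq δ t - lam) * gv t) volume 0 L := by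
            apply intervalIntegrable_of_bdd (C := (1+|lam|) * (CV + |e1|))
            · exact (((measurable_Wsq δ).sub measurable_const).mul
                hgvm).aestronglyMeasurable.restrict
            · intro t ht
              rw [uIoc_of_le hL.le] at ht
              have hb : |gv t| ≤ CV + |e1| := by
                rw [hgvdef]
                simp only []
                split
                · next hc =>
                    have h5 := hCV t ⟨ht.1.le, le_trans hc hML⟩
                    rw [Real.norm_eq_abs] at h5
                    linarith [abs_nonneg e1]
                · linarith [hCV0, le_refl |e1|]
              calc |(Wsq δ t - lam) * gv t| = |Wsq δ t - lam| * |gv t| := abs_mul _ _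
              _ ≤ (1+|lam|)*(CV+|e1|) :=
                  mul_le_mul (Wsq_sub_bound δ lam t) hb (abs_nonneg _) (by positivity)
          apply base.congr_ae
          apply aeR
          apply Filter.Eventually.of_forall
          intro t ht
          rw [uIoc_of_le hL.le] at ht
          rw [hveq t ⟨ht.1.le, ht.2⟩]
        have hcu : ContinuousOn u (Icc 0 L) := by
          have hk := intervalIntegral.continuousOn_primitive_interval'
            (f := fun t => (Wsq δ t - lam) * v t) (μ := volume) (b₁ := 0) (b₂ := L) (a := 0)
            hPuAll (by rw [uIcc_of_le hL.le]; exact ⟨le_rfl, hL.le⟩)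
          rw [uIcc_of_le hL.le] at hk
          exact (continuousOn_const.add hk).congr (fun x hx => hu x hx)
        apply hEv L hMLlt le_rfl
        apply ContinuousOn.intervalIntegrable
        rw [uIcc_of_le hL.le]
        exact hcu
    · -- u is constant e0 beyond M; then everything is integrable, contradiction
      push_neg at hEu
      have huconst : ∀ y, M < y → y ≤ L → u y = e0 := by
        intro y h1 h2
        rw [hu y ⟨hM0.trans h1.le, h2⟩, intervalIntegral.integral_undef (hEu y h1 h2)]
        ring
      set gu : ℝ → ℝ := fun t => if t ≤ M then US t else e0 with hgudef
      have hueq : ∀ t ∈ Icc (0:ℝ) L, u t = gu t := by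
        intro t ht
        rw [hgudef]
        simp only []
        split
        · next hc => exact (keyA t ⟨ht.1, hc⟩).1
        · next hc => exact huconst t (not_le.1 hc) ht.2
      have hCU0 : (0:ℝ) ≤ CU := le_trans (norm_nonneg _) (hCU 0 ⟨le_rfl, hL.le⟩)
      have hgum : Measurable gu := by
        rw [hgudef]
        exact Measurable.ite measurableSet_Iic
          (continuous_uSol δ lam e0 e1).measurable measurable_const
      have hPvAll : IntervalIntegrable u volume 0 L := by
        have base : IntervalIntegrable gu volume 0 L := by
          apply intervalIntegrable_of_bdd (C := CU + |e0|)
          · exact hgum.aestronglyMeasurable.restrict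
          · intro t ht
            rw [uIoc_of_le hL.le] at ht
            rw [hgudef]
            simp only []
            split
            · next hc =>
                have h5 := hCU t ⟨ht.1.le, le_trans hc hML⟩
                rw [Real.norm_eq_abs] at h5
                linarith [abs_nonneg e0]
            · linarith [hCU0, le_refl |e0|]
        apply base.congr_ae
        apply aeR
        apply Filter.Eventually.of_forall
        intro t ht
        rw [uIoc_of_le hL.le] at ht
        rw [hueq t ⟨ht.1.le, ht.2⟩]
      have hcv : ContinuousOn v (Icc 0 L) := by
        have hk := intervalIntegral.continuousOn_primitive_interval'
          (f := u) (μ := volume) (b₁ := 0) (b₂ := L) (a := 0)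
          hPvAll (by rw [uIcc_of_le hL.le]; exact ⟨le_rfl, hL.le⟩)
        rw [uIcc_of_le hL.le] at hk
        exact (continuousOn_const.add hk).congr (fun x hx => hv x hx)
      obtain ⟨Cv2, hCv2⟩ := (isCompact_Icc (a := (0:ℝ)) (b := L)).exists_bound_of_continuousOn hcv
      apply hEu L hMLlt le_rfl
      apply intervalIntegrable_of_bdd (C := (1+|lam|) * Cv2)
      · apply AEStronglyMeasurable.mul
        · exact ((measurable_Wsq δ).sub measurable_const).aestronglyMeasurable.restrict
        · apply ContinuousOn.aestronglyMeasurable _ measurableSet_uIoc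
          apply hcv.mono
          rw [uIoc_of_le hL.le]
          exact Ioc_subset_Icc_self
      · intro t ht
        rw [uIoc_of_le hL.le] at ht
        have hb : |v t| ≤ Cv2 := by
          have := hCv2 t ⟨ht.1.le, ht.2⟩
          rwa [Real.norm_eq_abs] at this
        have hCv20 : (0:ℝ) ≤ Cv2 := le_trans (abs_nonneg _) hb
        calc |(Wsq δ t - lam) * v t| = |Wsq δ t - lam| * |v t| := abs_mul _ _
        _ ≤ (1+|lam|) * Cv2 :=
            mul_le_mul (Wsq_sub_bound δ lam t) hb (abs_nonneg _) (by positivity)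
  intro x hx
  rw [← hMeqL] at hx
  exact keyA x hx

/-! ### The discriminant and its analysis -/

noncomputable def disc (δ lam : ℝ) : ℝ :=
  2 * cc (1-lam) δ * cc (-1-lam) δ + ((1-lam) + (-1-lam)) * (sc (1-lam) δ * sc (-1-lam) δ)

lemma cc_of_nonneg {c : ℝ} (hc : 0 ≤ c) (x : ℝ) : cc c x = Real.cosh (Real.sqrt c * x) :=
  if_pos hc

lemma cc_of_neg {c : ℝ} (hc : c < 0) (x : ℝ) : cc c x = Real.cos (Real.sqrt (-c) * x) :=
  if_neg (not_le.2 hc)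

lemma sc_of_pos {c : ℝ} (hc : 0 < c) (x : ℝ) :
    sc c x = Real.sinh (Real.sqrt c * x) / Real.sqrt c := if_pos hc

lemma sc_of_neg {c : ℝ} (hc : c < 0) (x : ℝ) :
    sc c x = Real.sin (Real.sqrt (-c) * x) / Real.sqrt (-c) := by
  rw [sc, if_neg (not_lt.2 hc.le), if_pos hc]

lemma sc_pos_of_pos {c x : ℝ} (hc : 0 < c) (hx : 0 < x) : 0 < sc c x := by
  rw [sc_of_pos hc]
  have h1 : 0 < Real.sqrt c := Real.sqrt_pos.2 hc
  exact div_pos (by rw [Real.sinh_pos_iff]; positivity) h1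

lemma sc_nonneg_of_nonneg {c x : ℝ} (hc : 0 ≤ c) (hx : 0 ≤ x) : 0 ≤ sc c x := by
  rcases eq_or_lt_of_le hc with h | h
  · rw [sc, if_neg (by rw [← h]; exact lt_irrefl 0), if_neg (by rw [← h]; exact lt_irrefl 0)]
    exact hx
  · rcases eq_or_lt_of_le hx with h2 | h2
    · rw [← h2, sc_zero]
    · exact (sc_pos_of_pos h h2).le

lemma cosh_ge_quad {x : ℝ} (hx : 0 ≤ x) : 1 + x^2/2 ≤ Real.cosh x := by
  have h1 : x = 2*(x/2) := by ring
  rw [h1, Real.cosh_two_mul]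
  have h2 : Real.cosh (x/2)^2 = Real.sinh (x/2)^2 + 1 := Real.cosh_sq _
  have h3 : x/2 ≤ Real.sinh (x/2) := Real.self_le_sinh_iff.2 (by linarith)
  nlinarith [h3]

lemma cosh_le_quad {x : ℝ} (h0 : 0 ≤ x) (h1 : x ≤ 1) :
    Real.cosh x ≤ 1 + x^2/2 + x^4*(5/96) := by
  have hb1 := Real.exp_bound (x := x) (by rw [abs_of_nonneg h0]; exact h1) (n := 4) (by norm_num)
  have hb2 := Real.exp_bound (x := -x) (by rw [abs_neg, abs_of_nonneg h0]; exact h1)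
    (n := 4) (by norm_num)
  rw [abs_of_nonneg h0] at hb1
  rw [abs_neg, abs_of_nonneg h0] at hb2
  simp only [Finset.sum_range_succ, Finset.sum_range_zero] at hb1 hb2
  norm_num [Nat.factorial] at hb1 hb2
  rw [Real.cosh_eq]
  rw [abs_le] at hb1 hb2
  nlinarith [hb1.2, hb2.2]

lemma cos_le_quad {x : ℝ} (h0 : 0 ≤ x) (h1 : x ≤ 1) :
    Real.cos x ≤ 1 - x^2/2 + x^4*(5/96) := by
  have hb := Real.cos_bound (x := x) (by rw [abs_of_nonneg h0]; exact h1)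
  rw [abs_of_nonneg h0] at hb
  rw [abs_le] at hb
  linarith [hb.2]

lemma coshcos_lt_one {δ : ℝ} (h0 : 0 < δ) (h1 : δ ≤ 1) : Real.cosh δ * Real.cos δ < 1 := by
  have hcos := cos_le_quad h0.le h1
  have hcosh := cosh_le_quad h0.le h1
  have hcospos : 0 < Real.cos δ := by
    apply Real.cos_pos_of_mem_Ioo
    constructor
    · have := Real.pi_gt_three; linarith
    · have := Real.pi_gt_three; linarith
  have hub_cos_nonneg : (0:ℝ) ≤ 1 - δ^2/2 + δ^4*(5/96) := by nlinarith
  have hub_cosh_nonneg : (0:ℝ) ≤ 1 + δ^2/2 + δ^4*(5/96) := by positivity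
  have key : Real.cosh δ * Real.cos δ ≤ (1 + δ^2/2 + δ^4*(5/96)) * (1 - δ^2/2 + δ^4*(5/96)) :=
    mul_le_mul hcosh hcos hcospos.le hub_cosh_nonneg
  have h4 : δ^2 ≤ 1 := by nlinarith
  have hp4 : 0 < δ^4 := by positivity
  have h4' : δ^4 ≤ 1 := by nlinarith [h4, sq_nonneg δ, sq_nonneg (δ^2-1)]
  have h8 : δ^4*δ^4 ≤ δ^4 := by nlinarith [h4', hp4]
  nlinarith [key, h8, hp4]

set_option maxHeartbeats 1000000 in
/-- regime `lam ≤ -1`: the discriminant exceeds 2 -/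
lemma disc_gt_left {δ lam : ℝ} (h0 : 0 < δ) (hlam : lam ≤ -1) : 2 < disc δ lam := by
  have ha : (0:ℝ) < 1 - lam := by linarith
  have hb : (0:ℝ) ≤ -1 - lam := by linarith
  have hsqa : Real.sqrt (1-lam) * δ > 0 := by
    apply mul_pos (Real.sqrt_pos.2 ha) h0
  have hcca : 1 + (1-lam)*δ^2/2 ≤ cc (1-lam) δ := by
    rw [cc_of_nonneg ha.le]
    have := cosh_ge_quad (x := Real.sqrt (1-lam) * δ) hsqa.le
    have hsq : (Real.sqrt (1-lam) * δ)^2 = (1-lam)*δ^2 := by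
      rw [mul_pow, Real.sq_sqrt ha.le]
    rw [hsq] at this
    linarith
  have hccb : 1 ≤ cc (-1-lam) δ := by
    rw [cc_of_nonneg hb]
    exact Real.one_le_cosh _
  have hsca : 0 < sc (1-lam) δ := sc_pos_of_pos ha h0
  have hscb : 0 ≤ sc (-1-lam) δ := sc_nonneg_of_nonneg hb h0.le
  have hδ2 : (0:ℝ) < δ^2 := by positivity
  have t1 : 1 + δ^2 ≤ cc (1-lam) δ := by nlinarith [hcca, hδ2]
  have hccapos : (0:ℝ) < cc (1-lam) δ := by linarith
  have t2 : cc (1-lam) δ * 1 ≤ cc (1-lam) δ * cc (-1-lam) δ :=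
    mul_le_mul_of_nonneg_left hccb hccapos.le
  have hterm2 : 0 ≤ ((1-lam) + (-1-lam)) * (sc (1-lam) δ * sc (-1-lam) δ) :=
    mul_nonneg (by linarith) (mul_nonneg hsca.le hscb)
  unfold disc
  nlinarith [t1, t2, hterm2, hδ2]

set_option maxHeartbeats 1000000 in
/-- middle regime `-1 < lam ≤ -ε`: the discriminant exceeds 2 for small δ -/
lemma disc_gt_mid {δ lam ε : ℝ} (h0 : 0 < δ) (h1 : δ < 1) (hε : 0 < ε) (hδε : δ^2 < 2*ε)
    (hl1 : -1 < lam) (hl2 : lam ≤ -ε) : 2 < disc δ lam := by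
  have ha : (0:ℝ) < 1 - lam := by linarith
  have hbneg : -1 - lam < 0 := by linarith
  have hbpos : (0:ℝ) < 1 + lam := by linarith
  have hneg : -(-1-lam) = 1 + lam := by ring
  set α := Real.sqrt (1-lam) * δ with hα
  set β := Real.sqrt (1+lam) * δ with hβ
  have hα0 : 0 < α := mul_pos (Real.sqrt_pos.2 ha) h0
  have hβ0 : 0 < β := mul_pos (Real.sqrt_pos.2 hbpos) h0
  have hα2 : α^2 = (1-lam)*δ^2 := by rw [hα, mul_pow, Real.sq_sqrt ha.le]
  have hβ2 : β^2 = (1+lam)*δ^2 := by rw [hβ, mul_pow, Real.sq_sqrt hbpos.le]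
  have hβ1 : β < 1 := by
    have hs : Real.sqrt (1+lam) ≤ 1 := Real.sqrt_le_one.2 (by linarith)
    calc β = Real.sqrt (1+lam) * δ := rfl
    _ ≤ 1 * δ := mul_le_mul_of_nonneg_right hs h0.le
    _ < 1 := by linarith
  have hβπ : β < Real.pi := by
    have := Real.pi_gt_three; linarith
  -- branch values
  have hcca : cc (1-lam) δ = Real.cosh α := cc_of_nonneg ha.le δ
  have hccb : cc (-1-lam) δ = Real.cos β := by
    rw [cc_of_neg hbneg, hneg]
  have hsca : sc (1-lam) δ = Real.sinh α / Real.sqrt (1-lam) := sc_of_pos ha δ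
  have hscb : sc (-1-lam) δ = Real.sin β / Real.sqrt (1+lam) := by
    rw [sc_of_neg hbneg, hneg]
  -- positivity of the sc term
  have hsinβ : 0 < Real.sin β := Real.sin_pos_of_pos_of_lt_pi hβ0 hβπ
  have hsinhα : 0 < Real.sinh α := by rw [Real.sinh_pos_iff]; exact hα0
  have hterm : 0 ≤ ((1-lam) + (-1-lam)) * (sc (1-lam) δ * sc (-1-lam) δ) := by
    apply mul_nonneg (by linarith)
    apply mul_nonneg
    · rw [hsca]; positivity
    · rw [hscb]; positivity
  -- lower bound for the cosh·cos product
  have hcoshα : 1 + α^2/2 ≤ Real.cosh α := cosh_ge_quad hα0.le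
  have hcosβ : 1 - β^2/2 ≤ Real.cos β := Real.one_sub_sq_div_two_le_cos
  have hub : (0:ℝ) ≤ 1 - β^2/2 := by nlinarith
  have hprod : (1 + α^2/2) * (1 - β^2/2) ≤ Real.cosh α * Real.cos β :=
    mul_le_mul hcoshα hcosβ hub (by positivity)
  have hgt1 : 1 < Real.cosh α * Real.cos β := by
    have hαβ : α^2 - β^2 = -2*lam*δ^2 := by rw [hα2, hβ2]; ring
    have hδ2 : (0:ℝ) < δ^2 := by positivity
    have hα2le : α^2 ≤ 2*δ^2 := by rw [hα2]; nlinarith [hδ2]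
    have hβ2le : β^2 ≤ δ^2 := by rw [hβ2]; nlinarith [hδ2]
    have hαβle : α^2*β^2 ≤ 2*δ^2*δ^2 :=
      mul_le_mul hα2le hβ2le (sq_nonneg β) (by positivity)
    have hεδ : ε*δ^2 ≤ -lam*δ^2 :=
      mul_le_mul_of_nonneg_right (by linarith) (sq_nonneg δ)
    have hA : (1 + α^2/2) * (1 - β^2/2) = 1 + (α^2 - β^2)/2 - α^2*β^2/4 := by ring
    have hB : 1 + ε*δ^2 - δ^2*δ^2/2 ≤ (1 + α^2/2) * (1 - β^2/2) := by
      rw [hA, hαβ]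
      linarith [hαβle, hεδ]
    have hC : (1:ℝ) < 1 + ε*δ^2 - δ^2*δ^2/2 := by
      nlinarith [mul_pos (show (0:ℝ) < 2*ε - δ^2 by linarith) hδ2]
    linarith [hprod, hB, hC]
  unfold disc
  rw [hcca, hccb]
  linarith [hterm, hgt1]

/-- value at `lam = 0` -/
lemma disc_at_zero {δ : ℝ} (h0 : 0 < δ) (h1 : δ ≤ 1) : disc δ 0 < 2 := by
  have h2 : cc (1-0) δ = Real.cosh δ := by
    rw [cc_of_nonneg (by norm_num)]
    norm_num [Real.sqrt_one]
  have h3 : cc (-1-0) δ = Real.cos δ := by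
    rw [cc_of_neg (by norm_num)]
    norm_num [Real.sqrt_one]
  have h4 := coshcos_lt_one h0 h1
  unfold disc
  rw [h2, h3]
  norm_num
  nlinarith [h4]

/-- continuity of the discriminant on `[-ε', 0]` -/
lemma disc_contOn {δ ε' : ℝ} (hε : 0 < ε') (hε1 : ε' ≤ 1/2) :
    ContinuousOn (fun lam => disc δ lam) (Icc (-ε') 0) := by
  have hexp : ∀ lam ∈ Icc (-ε') 0, disc δ lam
      = 2 * Real.cosh (Real.sqrt (1-lam) * δ) * Real.cos (Real.sqrt (1+lam) * δ)
        + ((1-lam) + (-1-lam)) * ((Real.sinh (Real.sqrt (1-lam) * δ) / Real.sqrt (1-lam))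
          * (Real.sin (Real.sqrt (1+lam) * δ) / Real.sqrt (1+lam))) := by
    intro lam hlam
    have ha : (0:ℝ) < 1 - lam := by linarith [hlam.2]
    have hbneg : -1 - lam < 0 := by linarith [hlam.1]
    have hneg : -(-1-lam) = 1 + lam := by ring
    unfold disc
    rw [cc_of_nonneg ha.le, cc_of_neg hbneg, hneg, sc_of_pos ha, sc_of_neg hbneg, hneg]
  apply ContinuousOn.congr _ (fun lam hlam => hexp lam hlam)
  have hc1 : Continuous fun lam : ℝ => Real.sqrt (1-lam) * δ :=
    (Real.continuous_sqrt.comp (continuous_const.sub continuous_id)).mul continuous_const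
  have hc2 : Continuous fun lam : ℝ => Real.sqrt (1+lam) * δ :=
    (Real.continuous_sqrt.comp (continuous_const.add continuous_id)).mul continuous_const
  have hne1 : ∀ lam ∈ Icc (-ε') 0, Real.sqrt (1-lam) ≠ 0 := by
    intro lam hlam
    exact ne_of_gt (Real.sqrt_pos.2 (by linarith [hlam.2]))
  have hne2 : ∀ lam ∈ Icc (-ε') 0, Real.sqrt (1+lam) ≠ 0 := by
    intro lam hlam
    exact ne_of_gt (Real.sqrt_pos.2 (by linarith [hlam.1]))
  apply ContinuousOn.add
  · exact ((continuous_const.mul (Real.continuous_cosh.comp hc1)).mul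
      (Real.continuous_cos.comp hc2)).continuousOn
  · apply ContinuousOn.mul (by fun_prop)
    apply ContinuousOn.mul
    · exact ContinuousOn.div (Real.continuous_sinh.comp hc1).continuousOn
        (Real.continuous_sqrt.comp (continuous_const.sub continuous_id)).continuousOn hne1
    · exact ContinuousOn.div (Real.continuous_sin.comp hc2).continuousOn
        (Real.continuous_sqrt.comp (continuous_const.add continuous_id)).continuousOn hne2

/-! ### Trace of the monodromy matrix -/

set_option maxHeartbeats 1000000 in
lemma trace_eq
    (T : ℝ → ℝ → ℝ → Matrix (Fin 2) (Fin 2) ℝ)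
    (hT : ∀ δ : ℝ, 0 < δ → ∀ lam : ℝ, ∀ x ∈ Set.Icc (0 : ℝ) (2 * δ), ∀ i j : Fin 2,
      T δ lam x i j = (1 : Matrix (Fin 2) (Fin 2) ℝ) i j +
        ∫ t in (0:ℝ)..x,
          ((!![0, Wsq δ t - lam; 1, 0] : Matrix (Fin 2) (Fin 2) ℝ) * T δ lam t) i j)
    (δ : ℝ) (hδ : 0 < δ) (lam : ℝ) :
    Matrix.trace (T δ lam (2*δ)) = disc δ lam := by
  have h2δ : (2*δ) ∈ Icc (0:ℝ) (2*δ) := ⟨by positivity, le_rfl⟩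
  have hent0 : ∀ j : Fin 2, ∀ t : ℝ,
      ((!![0, Wsq δ t - lam; 1, 0] : Matrix (Fin 2) (Fin 2) ℝ) * T δ lam t) 0 j
        = (Wsq δ t - lam) * T δ lam t 1 j := by
    intro j t
    simp [Matrix.mul_apply, Fin.sum_univ_two]
  have hent1 : ∀ j : Fin 2, ∀ t : ℝ,
      ((!![0, Wsq δ t - lam; 1, 0] : Matrix (Fin 2) (Fin 2) ℝ) * T δ lam t) 1 j
        = T δ lam t 0 j := by
    intro j t
    simp [Matrix.mul_apply, Fin.sum_univ_two]
  have hcol0 := uv_unique δ lam 1 0 hδ (fun x => T δ lam x 0 0) (fun x => T δ lam x 1 0)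
    (by
      intro x hx
      show T δ lam x 0 0 = 1 + ∫ t in (0:ℝ)..x, (Wsq δ t - lam) * T δ lam t 1 0
      rw [hT δ hδ lam x hx 0 0]
      have hI : (∫ t in (0:ℝ)..x,
          ((!![0, Wsq δ t - lam; 1, 0] : Matrix (Fin 2) (Fin 2) ℝ) * T δ lam t) 0 0)
          = ∫ t in (0:ℝ)..x, (Wsq δ t - lam) * T δ lam t 1 0 :=
        intervalIntegral.integral_congr (fun t _ => hent0 0 t)
      rw [hI]
      simp [Matrix.one_apply])
    (by
      intro x hx
      show T δ lam x 1 0 = 0 + ∫ t in (0:ℝ)..x, T δ lam t 0 0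
      rw [hT δ hδ lam x hx 1 0]
      have hI : (∫ t in (0:ℝ)..x,
          ((!![0, Wsq δ t - lam; 1, 0] : Matrix (Fin 2) (Fin 2) ℝ) * T δ lam t) 1 0)
          = ∫ t in (0:ℝ)..x, T δ lam t 0 0 :=
        intervalIntegral.integral_congr (fun t _ => hent1 0 t)
      rw [hI]
      simp [Matrix.one_apply])
  have hcol1 := uv_unique δ lam 0 1 hδ (fun x => T δ lam x 0 1) (fun x => T δ lam x 1 1)
    (by
      intro x hx
      show T δ lam x 0 1 = 0 + ∫ t in (0:ℝ)..x, (Wsq δ t - lam) * T δ lam t 1 1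
      rw [hT δ hδ lam x hx 0 1]
      have hI : (∫ t in (0:ℝ)..x,
          ((!![0, Wsq δ t - lam; 1, 0] : Matrix (Fin 2) (Fin 2) ℝ) * T δ lam t) 0 1)
          = ∫ t in (0:ℝ)..x, (Wsq δ t - lam) * T δ lam t 1 1 :=
        intervalIntegral.integral_congr (fun t _ => hent0 1 t)
      rw [hI]
      simp [Matrix.one_apply])
    (by
      intro x hx
      show T δ lam x 1 1 = 1 + ∫ t in (0:ℝ)..x, T δ lam t 0 1
      rw [hT δ hδ lam x hx 1 1]
      have hI : (∫ t in (0:ℝ)..x,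
          ((!![0, Wsq δ t - lam; 1, 0] : Matrix (Fin 2) (Fin 2) ℝ) * T δ lam t) 1 1)
          = ∫ t in (0:ℝ)..x, T δ lam t 0 1 :=
        intervalIntegral.integral_congr (fun t _ => hent1 1 t)
      rw [hI]
      simp [Matrix.one_apply])
  have e00 : T δ lam (2*δ) 0 0 = uSol δ lam 1 0 (2*δ) := (hcol0 (2*δ) h2δ).1
  have e11 : T δ lam (2*δ) 1 1 = vSol δ lam 0 1 (2*δ) := (hcol1 (2*δ) h2δ).2
  have hndle : ¬ (2*δ ≤ δ) := by linarith
  have h2d : 2*δ - δ = δ := by ring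
  have hu00 : uSol δ lam 1 0 (2*δ)
      = cc (-1-lam) δ * cc (1-lam) δ + (-1-lam) * sc (-1-lam) δ * sc (1-lam) δ := by
    simp only [uSol, stU, stV, if_neg hndle, h2d, sub_zero]
    ring
  have hv11 : vSol δ lam 0 1 (2*δ)
      = sc (-1-lam) δ * ((1-lam) * sc (1-lam) δ) + cc (-1-lam) δ * cc (1-lam) δ := by
    simp only [vSol, stU, stV, if_neg hndle, h2d, sub_zero]
    ring
  rw [Matrix.trace_fin_two, e00, e11, hu00, hv11]
  unfold disc
  ring

/-! ### The main theorem -/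

/-- let `T δ lam` solve the matrix initial value problem
`∂ₓT = [[0, W_δ − λ],[1,0]]·T`, `T(0) = I`, on `[0,2δ]` (encoded entrywise in integrated
form). With `Δ_δ(λ) = tr T_δ(λ)(2δ)` and `λ_δ = inf {λ : Δ_δ(λ) = 2}`, one has
`λ_δ → 0` as `δ ↓ 0`. -/
theorem periodic_ground_state_tends_to_zero
    (T : ℝ → ℝ → ℝ → Matrix (Fin 2) (Fin 2) ℝ)
    (hT : ∀ δ : ℝ, 0 < δ → ∀ lam : ℝ, ∀ x ∈ Set.Icc (0 : ℝ) (2 * δ), ∀ i j : Fin 2,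
      T δ lam x i j = (1 : Matrix (Fin 2) (Fin 2) ℝ) i j +
        ∫ t in (0:ℝ)..x,
          ((!![0, Wsq δ t - lam; 1, 0] : Matrix (Fin 2) (Fin 2) ℝ) * T δ lam t) i j) :
    Filter.Tendsto
      (fun δ : ℝ => sInf {lam : ℝ | Matrix.trace (T δ lam (2 * δ)) = 2})
      (nhdsWithin 0 (Set.Ioi 0)) (nhds 0) := by
  rw [Metric.tendsto_nhdsWithin_nhds]
  intro ε hε
  set ε' : ℝ := min (ε/2) (1/2) with hε'def
  have hε'pos : 0 < ε' := lt_min (by linarith) (by norm_num)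
  have hε'half : ε' ≤ 1/2 := min_le_right _ _
  have hε'ε : ε' < ε := lt_of_le_of_lt (min_le_left _ _) (by linarith)
  refine ⟨Real.sqrt ε', Real.sqrt_pos.2 hε'pos, ?_⟩
  intro δ hδIoi hδd
  have hδ : 0 < δ := hδIoi
  rw [Real.dist_eq, sub_zero] at hδd
  have hδd' : δ < Real.sqrt ε' := lt_of_le_of_lt (le_abs_self δ) hδd
  have hδ2 : δ^2 < ε' := (Real.lt_sqrt hδ.le).1 hδd'
  have hδ1 : δ < 1 := by nlinarith [hδ2, hε'half, hδ]
  have hset : {lam : ℝ | Matrix.trace (T δ lam (2*δ)) = 2} = {lam : ℝ | disc δ lam = 2} := by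
    ext lam
    simp only [mem_setOf_eq, trace_eq T hT δ hδ lam]
  rw [hset]
  have hgt : ∀ lam, lam ≤ -ε' → 2 < disc δ lam := by
    intro lam hlam
    rcases le_or_gt lam (-1) with h | h
    · exact disc_gt_left hδ h
    · exact disc_gt_mid hδ hδ1 hε'pos (by linarith) h hlam
  have hcont := disc_contOn (δ := δ) hε'pos hε'half
  have hend1 : disc δ 0 < 2 := disc_at_zero hδ hδ1.le
  have hend2 : 2 < disc δ (-ε') := hgt _ le_rfl
  have hIVT := intermediate_value_Icc' (a := -ε') (b := 0) (by linarith) hcont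
  obtain ⟨lam₀, hlam₀mem, hlam₀⟩ := hIVT ⟨hend1.le, hend2.le⟩
  have hlam₀S : lam₀ ∈ {lam : ℝ | disc δ lam = 2} := hlam₀
  have hlb : ∀ lam ∈ {lam : ℝ | disc δ lam = 2}, -ε' < lam := by
    intro lam hl
    by_contra hcon
    push_neg at hcon
    have h1 := hgt lam hcon
    rw [mem_setOf_eq] at hl
    linarith
  have hbdd : BddBelow {lam : ℝ | disc δ lam = 2} := ⟨-ε', fun lam hl => (hlb lam hl).le⟩
  have h1 : -ε' ≤ sInf {lam : ℝ | disc δ lam = 2} :=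
    le_csInf ⟨lam₀, hlam₀S⟩ (fun lam hl => (hlb lam hl).le)
  have h2 : sInf {lam : ℝ | disc δ lam = 2} ≤ 0 :=
    le_trans (csInf_le hbdd hlam₀S) hlam₀mem.2
  rw [Real.dist_eq, sub_zero]
  exact abs_lt.2 ⟨by linarith, by linarith⟩
end
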